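/- arXiv:2012.02082 — 7 statements merged into one kernel-verified Lean document; each statement's English description precedes it below -/
import Mathlib

section
/- Let f : P({1,...,K}) → {0,1} be monotone (f(I) ≤ f(J) whenever I ⊆ J). Let δ_1,...,δ_K be independent Bernoulli random variables with P(δ_i = 1) = p_i and let I = {i : δ_i = 1}. Then for every integer T with 0 ≤ T ≤ K−1, the conditional probability satisfies P(f(I) = 1 | |I| = T) ≤ P(f(I) = 1 | |I| = T+1). -/
open scoped BigOperators

/-- Poisson sampling probability of the subset `I`. -/
noncomputable def bernoulliP {K : ℕ} (p : Fin K → ℝ) (I : Finset (Fin K)) : ℝ :=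
  (∏ i ∈ I, p i) * ∏ j ∈ Iᶜ, (1 - p j)

lemma bernoulliP_nonneg {K : ℕ} (p : Fin K → ℝ) (hp : ∀ i, 0 ≤ p i ∧ p i ≤ 1)
    (I : Finset (Fin K)) : 0 ≤ bernoulliP p I := by
  unfold bernoulliP
  apply mul_nonneg
  · exact Finset.prod_nonneg fun i _ => (hp i).1
  · exact Finset.prod_nonneg fun i _ => by linarith [(hp i).2]

lemma bernoulliP_mul {K : ℕ} (p : Fin K → ℝ) (I J : Finset (Fin K)) :
    bernoulliP p I * bernoulliP p J = bernoulliP p (I ∩ J) * bernoulliP p (I ∪ J) := by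
  unfold bernoulliP
  have h1 : (∏ i ∈ I ∪ J, p i) * ∏ i ∈ I ∩ J, p i = (∏ i ∈ I, p i) * ∏ i ∈ J, p i :=
    Finset.prod_union_inter
  have h2 : (∏ j ∈ Iᶜ ∪ Jᶜ, (1 - p j)) * ∏ j ∈ Iᶜ ∩ Jᶜ, (1 - p j)
      = (∏ j ∈ Iᶜ, (1 - p j)) * ∏ j ∈ Jᶜ, (1 - p j) := Finset.prod_union_inter
  rw [Finset.compl_inter, Finset.compl_union]
  linear_combination -(∏ j ∈ Iᶜ, (1 - p j)) * (∏ j ∈ Jᶜ, (1 - p j)) * h1 -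
    (∏ i ∈ I ∩ J, p i) * (∏ i ∈ I ∪ J, p i) * h2

lemma lym_step {α : Type*} [DecidableEq α] (D : Finset α) (t : ℕ) (hD : D.card = 2*t+1)
    (g : Finset α → ℝ) (hg : ∀ X Y : Finset α, X ⊆ Y → g X ≤ g Y) :
    ∑ X ∈ D.powersetCard t, g X ≤ ∑ Y ∈ D.powersetCard (t+1), g Y := by
  have hpos : (0:ℝ) < ((t:ℝ)+1) := by positivity
  rw [← mul_le_mul_iff_right₀ hpos]
  have hL : ((t:ℝ)+1) * ∑ X ∈ D.powersetCard t, g X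
      = ∑ σ ∈ (D.powersetCard (t+1)).sigma (fun Y => Y.powersetCard t), g σ.2 := by
    have e : ∑ σ ∈ (D.powersetCard (t+1)).sigma (fun Y => Y.powersetCard t), g σ.2
        = ∑ σ ∈ (D.powersetCard t).sigma (fun X => (D \ X).powersetCard 1), g σ.1 := by
      apply Finset.sum_nbij' (i := fun σ => ⟨σ.2, σ.1 \ σ.2⟩) (j := fun σ => ⟨σ.1 ∪ σ.2, σ.1⟩)
      · rintro ⟨Y, X⟩ hm
        simp only [Finset.mem_sigma, Finset.mem_powersetCard] at hm ⊢
        obtain ⟨⟨hYD, hYc⟩, hXY, hXc⟩ := hm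
        refine ⟨⟨hXY.trans hYD, hXc⟩,
          Finset.sdiff_subset_sdiff hYD (Finset.Subset.refl X), ?_⟩
        rw [Finset.card_sdiff_of_subset hXY, hYc, hXc]; omega
      · rintro ⟨X, Z⟩ hm
        simp only [Finset.mem_sigma, Finset.mem_powersetCard] at hm ⊢
        obtain ⟨⟨hXD, hXc⟩, hZ, hZc⟩ := hm
        have hZD : Z ⊆ D := hZ.trans (Finset.sdiff_subset)
        have hdisj : Disjoint X Z :=
          (Finset.disjoint_of_subset_left hZ Finset.sdiff_disjoint).symm
        refine ⟨⟨Finset.union_subset hXD hZD, ?_⟩, Finset.subset_union_left, hXc⟩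
        rw [Finset.card_union_of_disjoint hdisj, hXc, hZc]
      · rintro ⟨Y, X⟩ hm
        simp only [Finset.mem_sigma, Finset.mem_powersetCard] at hm
        obtain ⟨⟨hYD, hYc⟩, hXY, hXc⟩ := hm
        simp [Finset.union_sdiff_of_subset hXY]
      · rintro ⟨X, Z⟩ hm
        simp only [Finset.mem_sigma, Finset.mem_powersetCard] at hm
        obtain ⟨⟨hXD, hXc⟩, hZ, hZc⟩ := hm
        have hdisj : Disjoint X Z :=
          (Finset.disjoint_of_subset_left hZ Finset.sdiff_disjoint).symm
        simp [Finset.union_sdiff_cancel_left hdisj]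
      · rintro ⟨Y, X⟩ _; rfl
    rw [e, Finset.sum_sigma, Finset.mul_sum]
    apply Finset.sum_congr rfl
    intro X hX
    rw [Finset.mem_powersetCard] at hX
    show ((t:ℝ)+1) * g X = ∑ _s ∈ (D \ X).powersetCard 1, g X
    rw [Finset.sum_const, Finset.card_powersetCard, Finset.card_sdiff_of_subset hX.1, hD, hX.2,
      Nat.choose_one_right, show 2*t+1-t = t+1 from by omega, nsmul_eq_mul]
    push_cast; ring
  have hR : ((t:ℝ)+1) * ∑ Y ∈ D.powersetCard (t+1), g Y
      = ∑ σ ∈ (D.powersetCard (t+1)).sigma (fun Y => Y.powersetCard t), g σ.1 := by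
    rw [Finset.sum_sigma, Finset.mul_sum]
    apply Finset.sum_congr rfl
    intro Y hY
    rw [Finset.mem_powersetCard] at hY
    show ((t:ℝ)+1) * g Y = ∑ _s ∈ Y.powersetCard t, g Y
    rw [Finset.sum_const, Finset.card_powersetCard, hY.2, Nat.choose_succ_self_right,
      nsmul_eq_mul]
    push_cast; ring
  rw [hL, hR]
  apply Finset.sum_le_sum
  rintro ⟨Y, X⟩ hm
  simp only [Finset.mem_sigma, Finset.mem_powersetCard] at hm
  exact hg X Y hm.2.1

/-- classes of pairs -/
def classesW (K T : ℕ) : Finset (Finset (Fin K) × Finset (Fin K)) :=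
  (Finset.univ ×ˢ Finset.univ).filter
    (fun q => q.1 ⊆ q.2 ∧ q.1.card + q.2.card = 2*T+1)

def fiberW {K : ℕ} (T : ℕ) (q : Finset (Fin K) × Finset (Fin K)) : Finset (Finset (Fin K)) :=
  (q.2 \ q.1).powersetCard (T - q.1.card)

lemma reindexW {K : ℕ} (T : ℕ) (F : Finset (Fin K) → Finset (Fin K) → ℝ) :
    ∑ x ∈ (Finset.univ.filter (fun I : Finset (Fin K) => I.card = T)) ×ˢ
        (Finset.univ.filter (fun I : Finset (Fin K) => I.card = T+1)),
      F x.1 x.2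
    = ∑ σ ∈ (classesW K T).sigma (fiberW T), F (σ.1.1 ∪ σ.2) (σ.1.2 \ σ.2) := by
  apply Finset.sum_nbij' (i := fun x => ⟨(x.1 ∩ x.2, x.1 ∪ x.2), x.1 \ x.2⟩)
    (j := fun σ => (σ.1.1 ∪ σ.2, σ.1.2 \ σ.2))
  · rintro ⟨I, J⟩ hm
    simp only [Finset.mem_product, Finset.mem_filter, Finset.mem_univ, true_and] at hm
    obtain ⟨hI, hJ⟩ := hm
    have hcc : (I ∩ J).card + (I ∪ J).card = 2*T+1 := by
      rw [Finset.card_inter_add_card_union, hI, hJ]; omega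
    have hsd : (I \ J).card + (I ∩ J).card = I.card := Finset.card_sdiff_add_card_inter I J
    simp only [Finset.mem_sigma, classesW, fiberW, Finset.mem_filter, Finset.mem_product,
      Finset.mem_univ, true_and, Finset.mem_powersetCard]
    refine ⟨⟨Finset.inter_subset_union, hcc⟩, ?_, by omega⟩
    intro a ha
    simp only [Finset.mem_sdiff, Finset.mem_union, Finset.mem_inter] at ha ⊢
    tauto
  · rintro ⟨⟨A, B⟩, X⟩ hm
    simp only [Finset.mem_sigma, classesW, fiberW, Finset.mem_filter, Finset.mem_product,
      Finset.mem_univ, true_and, Finset.mem_powersetCard] at hm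
    obtain ⟨⟨hAB, hcc⟩, hXs, hXc⟩ := hm
    have hAle : A.card ≤ B.card := Finset.card_le_card hAB
    have hXB : X ⊆ B := hXs.trans Finset.sdiff_subset
    have hdisj : Disjoint A X :=
      (Finset.disjoint_of_subset_left hXs Finset.sdiff_disjoint).symm
    simp only [Finset.mem_product, Finset.mem_filter, Finset.mem_univ, true_and]
    constructor
    · rw [Finset.card_union_of_disjoint hdisj]; omega
    · rw [Finset.card_sdiff_of_subset hXB]; omega
  · rintro ⟨I, J⟩ hm
    have e1 : I ∩ J ∪ I \ J = I := by ext a; simp; tauto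
    have e2 : (I ∪ J) \ (I \ J) = J := by ext a; simp; tauto
    simp [e1, e2]
  · rintro ⟨⟨A, B⟩, X⟩ hm
    simp only [Finset.mem_sigma, classesW, fiberW, Finset.mem_filter, Finset.mem_product,
      Finset.mem_univ, true_and, Finset.mem_powersetCard] at hm
    obtain ⟨⟨hAB, hcc⟩, hXs, hXc⟩ := hm
    have hA : ∀ a, a ∈ A → a ∈ B := fun a h => hAB h
    have hX : ∀ a, a ∈ X → a ∈ B ∧ a ∉ A := fun a h => by
      have := hXs h; rw [Finset.mem_sdiff] at this; exact this
    have e1 : (A ∪ X) ∩ (B \ X) = A := by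
      ext a
      have h1 := hA a; have h2 := hX a
      simp only [Finset.mem_inter, Finset.mem_union, Finset.mem_sdiff]
      tauto
    have e2 : (A ∪ X) ∪ (B \ X) = B := by
      ext a
      have h1 := hA a; have h2 := hX a
      simp only [Finset.mem_union, Finset.mem_sdiff]
      tauto
    have e3 : (A ∪ X) \ (B \ X) = X := by
      ext a
      have h1 := hA a; have h2 := hX a
      simp only [Finset.mem_union, Finset.mem_sdiff]
      tauto
    simp [e1, e2, e3]
  · rintro ⟨I, J⟩ hm
    have e1 : I ∩ J ∪ I \ J = I := by ext a; simp; tauto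
    have e2 : (I ∪ J) \ (I \ J) = J := by ext a; simp; tauto
    rw [e1, e2]

lemma muW {K : ℕ} (p : Fin K → ℝ) (T : ℕ) :
    ∀ σ ∈ (classesW K T).sigma (fiberW T),
      bernoulliP p (σ.1.1 ∪ σ.2) * bernoulliP p (σ.1.2 \ σ.2)
        = bernoulliP p σ.1.1 * bernoulliP p σ.1.2 := by
  rintro ⟨⟨A, B⟩, X⟩ hm
  simp only [Finset.mem_sigma, classesW, fiberW, Finset.mem_filter, Finset.mem_product,
    Finset.mem_univ, true_and, Finset.mem_powersetCard] at hm
  obtain ⟨⟨hAB, hcc⟩, hXs, hXc⟩ := hm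
  have hA : ∀ a, a ∈ A → a ∈ B := fun a h => hAB h
  have hX : ∀ a, a ∈ X → a ∈ B ∧ a ∉ A := fun a h => by
    have := hXs h; rw [Finset.mem_sdiff] at this; exact this
  have e1 : (A ∪ X) ∩ (B \ X) = A := by
    ext a
    have h1 := hA a; have h2 := hX a
    simp only [Finset.mem_inter, Finset.mem_union, Finset.mem_sdiff]
    tauto
  have e2 : (A ∪ X) ∪ (B \ X) = B := by
    ext a
    have h1 := hA a; have h2 := hX a
    simp only [Finset.mem_union, Finset.mem_sdiff]
    tauto
  rw [bernoulliP_mul, e1, e2]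

theorem stmt0 {K : ℕ} (p : Fin K → ℝ) (hp : ∀ i, 0 ≤ p i ∧ p i ≤ 1)
    (f : Finset (Fin K) → ℝ) (hf01 : ∀ I, f I = 0 ∨ f I = 1)
    (hmono : ∀ I J : Finset (Fin K), I ⊆ J → f I ≤ f J)
    (T : ℕ) (hT : T + 1 ≤ K)
    (hden1 : 0 < ∑ I ∈ Finset.univ.filter (fun I : Finset (Fin K) => I.card = T),
      bernoulliP p I)
    (hden2 : 0 < ∑ I ∈ Finset.univ.filter (fun I : Finset (Fin K) => I.card = T + 1),
      bernoulliP p I) :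
    (∑ I ∈ Finset.univ.filter (fun I : Finset (Fin K) => I.card = T), f I * bernoulliP p I) /
        (∑ I ∈ Finset.univ.filter (fun I : Finset (Fin K) => I.card = T), bernoulliP p I) ≤
      (∑ I ∈ Finset.univ.filter (fun I : Finset (Fin K) => I.card = T + 1),
          f I * bernoulliP p I) /
        (∑ I ∈ Finset.univ.filter (fun I : Finset (Fin K) => I.card = T + 1),
          bernoulliP p I) := by
  set μ := bernoulliP p with hμdef
  have hμ0 : ∀ I, 0 ≤ μ I := bernoulliP_nonneg p hp
  rw [div_le_div_iff₀ hden1 hden2]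
  set L1 := Finset.univ.filter (fun I : Finset (Fin K) => I.card = T) with hL1
  set L2 := Finset.univ.filter (fun I : Finset (Fin K) => I.card = T+1) with hL2
  have hLeq : (∑ I ∈ L1, f I * μ I) * (∑ J ∈ L2, μ J)
      = ∑ x ∈ L1 ×ˢ L2, f x.1 * (μ x.1 * μ x.2) := by
    rw [Finset.sum_mul_sum, Finset.sum_product]
    exact Finset.sum_congr rfl fun I _ => Finset.sum_congr rfl fun J _ => by ring
  have hReq : (∑ J ∈ L2, f J * μ J) * (∑ I ∈ L1, μ I)
      = ∑ x ∈ L1 ×ˢ L2, f x.2 * (μ x.1 * μ x.2) := by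
    rw [Finset.sum_mul_sum, Finset.sum_comm, Finset.sum_product]
    exact Finset.sum_congr rfl fun I _ => Finset.sum_congr rfl fun J _ => by ring
  rw [hLeq, hReq, reindexW T (fun I J => f I * (μ I * μ J)),
    reindexW T (fun I J => f J * (μ I * μ J))]
  have hmu := muW p T
  have hLeq2 : ∑ σ ∈ (classesW K T).sigma (fiberW T),
        f (σ.1.1 ∪ σ.2) * (μ (σ.1.1 ∪ σ.2) * μ (σ.1.2 \ σ.2))
      = ∑ σ ∈ (classesW K T).sigma (fiberW T),
        f (σ.1.1 ∪ σ.2) * (μ σ.1.1 * μ σ.1.2) :=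
    Finset.sum_congr rfl fun σ hσ => by rw [hμdef, hmu σ hσ]
  have hReq2 : ∑ σ ∈ (classesW K T).sigma (fiberW T),
        f (σ.1.2 \ σ.2) * (μ (σ.1.1 ∪ σ.2) * μ (σ.1.2 \ σ.2))
      = ∑ σ ∈ (classesW K T).sigma (fiberW T),
        f (σ.1.2 \ σ.2) * (μ σ.1.1 * μ σ.1.2) :=
    Finset.sum_congr rfl fun σ hσ => by rw [hμdef, hmu σ hσ]
  rw [hLeq2, hReq2, Finset.sum_sigma, Finset.sum_sigma]
  apply Finset.sum_le_sum
  rintro ⟨A, B⟩ hq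
  simp only [classesW, Finset.mem_filter, Finset.mem_product, Finset.mem_univ, true_and] at hq
  obtain ⟨hAB, hcc⟩ := hq
  have hAle : A.card ≤ B.card := Finset.card_le_card hAB
  have hDc : (B \ A).card = 2*(T - A.card)+1 := by
    rw [Finset.card_sdiff_of_subset hAB]; omega
  simp only [fiberW]
  rw [← Finset.sum_mul, ← Finset.sum_mul]
  apply mul_le_mul_of_nonneg_right _ (mul_nonneg (hμ0 _) (hμ0 _))
  have hstep : ∑ X ∈ (B \ A).powersetCard (T - A.card), f (B \ X)
      = ∑ Y ∈ (B \ A).powersetCard (T - A.card + 1), f (A ∪ Y) := by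
    apply Finset.sum_nbij' (i := fun X => (B \ A) \ X) (j := fun Y => (B \ A) \ Y)
    · intro X hX
      rw [Finset.mem_powersetCard] at hX ⊢
      refine ⟨Finset.sdiff_subset, ?_⟩
      rw [Finset.card_sdiff_of_subset hX.1, hDc, hX.2]; omega
    · intro Y hY
      rw [Finset.mem_powersetCard] at hY ⊢
      refine ⟨Finset.sdiff_subset, ?_⟩
      rw [Finset.card_sdiff_of_subset hY.1, hDc, hY.2]; omega
    · intro X hX
      rw [Finset.mem_powersetCard] at hX
      exact Finset.sdiff_sdiff_eq_self hX.1
    · intro Y hY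
      rw [Finset.mem_powersetCard] at hY
      exact Finset.sdiff_sdiff_eq_self hY.1
    · intro X hX
      rw [Finset.mem_powersetCard] at hX
      congr 1
      ext a
      have h1 : a ∈ A → a ∈ B := fun h => hAB h
      have h2 : a ∈ X → a ∈ B ∧ a ∉ A := fun h => by
        have := hX.1 h; rw [Finset.mem_sdiff] at this; exact this
      simp only [Finset.mem_union, Finset.mem_sdiff]
      tauto
  rw [hstep]
  exact lym_step (B \ A) (T - A.card) hDc (fun S => f (A ∪ S))
    (fun X Y hXY => hmono _ _ (Finset.union_subset_union (Finset.Subset.refl A) hXY))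
end

section
/- Fix a finite set B of odd cardinality 2T+1 and a monotone {0,1}-valued function f on subsets of B. Then ∑_{I ⊆ B, |I| = T} f(I)(1 − f(B∖I)) ≤ ∑_{J ⊆ B, |J| = T+1} f(J)(1 − f(B∖J)). -/
/-!
The weight `g I = f I * (1 - f (B \ I))` is monotone in `I`. Double count the pairs `I ⊆ J ⊆ B`
with `#I = T`, `#J = T + 1`: each `T`-set lies in `#B - T = T + 1` such `J` and each `(T+1)`-set
contains `T + 1` such `I`, so comparing `g I ≤ g J` pair by pair gives the inequality scaled by
`T + 1`.
-/

open Finset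

namespace Finset

variable {α R : Type*} [DecidableEq α] [AddCommMonoid R] [PartialOrder R] [IsOrderedAddMonoid R]

theorem card_sub_nsmul_sum_powersetCard_le {s : Finset α} {k : ℕ} {g : Finset α → R}
    (hg : ∀ I J, I ⊆ J → J ⊆ s → g I ≤ g J) :
    (#s - k) • ∑ I ∈ s.powersetCard k, g I ≤
      (k + 1) • ∑ J ∈ s.powersetCard (k + 1), g J := by
  set 𝒜 := s.powersetCard k
  set ℬ := s.powersetCard (k + 1)
  have above : ∀ I ∈ 𝒜, #(ℬ.bipartiteAbove (· ⊆ ·) I) = #s - k := by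
    intro I hI
    obtain ⟨hIs, hIk⟩ := mem_powersetCard.mp hI
    rw [bipartiteAbove, card_filter_powersetCard_subset I s (k + 1) hIs (by omega), hIk,
      Nat.add_sub_cancel_left, Nat.choose_one_right]
  have below : ∀ J ∈ ℬ, #(𝒜.bipartiteBelow (· ⊆ ·) J) = k + 1 := by
    intro J hJ
    obtain ⟨hJs, hJk⟩ := mem_powersetCard.mp hJ
    have : 𝒜.bipartiteBelow (· ⊆ ·) J = J.powersetCard k := by
      ext I
      simp only [𝒜, mem_bipartiteBelow, mem_powersetCard]
      exact ⟨fun ⟨⟨_, hIk⟩, hIJ⟩ => ⟨hIJ, hIk⟩,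
        fun ⟨hIJ, hIk⟩ => ⟨⟨hIJ.trans hJs, hIk⟩, hIJ⟩⟩
    rw [this, card_powersetCard, hJk, Nat.choose_succ_self_right]
  calc (#s - k) • ∑ I ∈ 𝒜, g I
      = ∑ I ∈ 𝒜, ∑ _J ∈ ℬ.bipartiteAbove (· ⊆ ·) I, g I := by
        rw [smul_sum]
        exact sum_congr rfl fun I hI => by rw [sum_const, above I hI]
    _ ≤ ∑ I ∈ 𝒜, ∑ J ∈ ℬ.bipartiteAbove (· ⊆ ·) I, g J := by
        refine sum_le_sum fun I _ => sum_le_sum fun J hJ => ?_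
        obtain ⟨hJ, hIJ⟩ := mem_filter.mp hJ
        exact hg I J hIJ (mem_powersetCard.mp hJ).1
    _ = ∑ J ∈ ℬ, ∑ _I ∈ 𝒜.bipartiteBelow (· ⊆ ·) J, g J :=
        sum_sum_bipartiteAbove_eq_sum_sum_bipartiteBelow _ fun _ J => g J
    _ = (k + 1) • ∑ J ∈ ℬ, g J := by
        rw [smul_sum]
        exact sum_congr rfl fun J hJ => by rw [sum_const, below J hJ]

end Finset

theorem monotone_mul_one_sub_sdiff {α : Type*} [DecidableEq α] (B : Finset α)
    {f : Finset α → ℝ} (hf : ∀ I, 0 ≤ f I ∧ f I ≤ 1) (hmono : Monotone f) :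
    Monotone fun I => f I * (1 - f (B \ I)) := fun I J hIJ =>
  mul_le_mul (hmono hIJ) (by linarith [hmono (sdiff_subset_sdiff le_rfl hIJ : B \ J ≤ B \ I)])
    (by linarith [hf (B \ I)]) (hf J).1

theorem stmt2 {α : Type*} [DecidableEq α] (B : Finset α) (T : ℕ) (hB : B.card = 2 * T + 1)
    (f : Finset α → ℝ) (hf01 : ∀ I, f I = 0 ∨ f I = 1)
    (hmono : ∀ I J : Finset α, I ⊆ J → f I ≤ f J) :
    ∑ I ∈ B.powerset.filter (fun I => I.card = T), f I * (1 - f (B \ I)) ≤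
      ∑ J ∈ B.powerset.filter (fun J => J.card = T + 1), f J * (1 - f (B \ J)) := by
  have hf : ∀ I, 0 ≤ f I ∧ f I ≤ 1 := fun I => by rcases hf01 I with h | h <;> norm_num [h]
  have hg := monotone_mul_one_sub_sdiff B hf fun I J => hmono I J
  have key := card_sub_nsmul_sum_powersetCard_le (s := B) (k := T) fun I J hIJ _ => hg hIJ
  rw [hB, show 2 * T + 1 - T = T + 1 by omega] at key
  simpa only [powersetCard_eq_filter] using le_of_nsmul_le_nsmul_right T.succ_ne_zero key
end

section
/- Let δ_1,...,δ_K be independent Bernoulli random variables with P(δ_i=1)=p_i and suppose ∑_{i=1}^K p_i = S where S is a positive integer. Then P(∑_{i=1}^K δ_i ≥ S) ≥ 1/2. -/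
open scoped BigOperators

set_option maxHeartbeats 1000000

open Finset

namespace JSbin


variable {n m : ℕ}

/-- binomial weights with parameter x = m/n -/
noncomputable def bb (n m k : ℕ) : ℝ :=
  (n.choose k : ℝ) * ((m : ℝ)/n)^k * (1 - (m : ℝ)/n)^(n - k)

lemma x_pos (h1 : 1 ≤ m) (h2 : m < n) : 0 < (m : ℝ)/n := by
  have hn : (0:ℝ) < n := by
    have : 0 < n := by omega
    exact_mod_cast this
  have hm : (0:ℝ) < m := by exact_mod_cast h1
  positivity

lemma y_pos (h2 : m < n) : 0 < 1 - (m : ℝ)/n := by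
  have hn : (0:ℝ) < n := by
    have : 0 < n := by omega
    exact_mod_cast this
  rw [sub_pos, div_lt_one hn]
  exact_mod_cast h2

lemma bb_nonneg (h1 : 1 ≤ m) (h2 : m < n) (k : ℕ) : 0 ≤ bb n m k := by
  have hx := (x_pos h1 h2).le
  have hy := (y_pos h2).le
  unfold bb
  have hc : (0:ℝ) ≤ (n.choose k : ℝ) := by positivity
  exact mul_nonneg (mul_nonneg hc (pow_nonneg hx k)) (pow_nonneg hy _)

lemma bb_pos (h1 : 1 ≤ m) (h2 : m < n) {k : ℕ} (hk : k ≤ n) : 0 < bb n m k := by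
  have hx := x_pos h1 h2
  have hy := y_pos h2
  have hc : 0 < (n.choose k : ℝ) := by
    exact_mod_cast Nat.choose_pos hk
  unfold bb
  exact mul_pos (mul_pos hc (pow_pos hx k)) (pow_pos hy _)

lemma bb_zero (h : n < k) : bb n m k = 0 := by
  unfold bb
  rw [Nat.choose_eq_zero_of_lt h]
  simp

/-- key cross-multiplied ratio identity -/
lemma rat (h1 : 1 ≤ m) (h2 : m < n) {k : ℕ} (hk : k < n) :
    bb n m (k+1) * (((k:ℝ)+1) * ((n:ℝ) - m)) = bb n m k * (((n:ℝ) - k) * m) := by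
  have hn : (0:ℝ) < n := by
    have : 0 < n := by omega
    exact_mod_cast this
  have hch : ((n.choose (k+1) : ℝ)) * ((k:ℝ)+1) = (n.choose k : ℝ) * ((n:ℝ) - k) := by
    have := Nat.choose_succ_right_eq n k
    have hkn : k ≤ n := hk.le
    have : ((n.choose (k+1) * (k+1) : ℕ) : ℝ) = ((n.choose k * (n - k) : ℕ) : ℝ) := by
      exact_mod_cast congrArg (Nat.cast (R := ℝ)) this
    push_cast [Nat.cast_sub hkn] at this
    linarith [this]
  have hexp : n - k = (n - (k+1)) + 1 := by omega
  have hxy : ((m:ℝ)/n) * ((n:ℝ) - m) = (1 - (m:ℝ)/n) * m := by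
    field_simp
  unfold bb
  rw [hexp, pow_succ]
  linear_combination (((m:ℝ)/n)^(k+1) * (1 - (m:ℝ)/n)^(n-(k+1)) * ((n:ℝ)-(m:ℝ))) * hch
    + ((n.choose k:ℝ) * ((n:ℝ)-(k:ℝ)) * ((m:ℝ)/n)^k * (1-(m:ℝ)/n)^(n-(k+1))) * hxy

/-- the chain lemma: as long as the factor condition holds, the reflected
weight is strictly below -/
lemma chain (h1 : 1 ≤ m) (h2 : m < n) : ∀ j : ℕ, j + 1 ≤ m → m + j ≤ n →
    ((j:ℝ))^2*((m:ℝ)^2-((n:ℝ)-m)^2) ≤ (m:ℝ)^2*(2*((n:ℝ)-m)+1) →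
    bb n m (m-1-j) < bb n m (m+j) := by
  intro j
  induction j with
  | zero =>
    intro _ _ _
    have e := rat h1 h2 (k := m-1) (by omega)
    have hidx : m - 1 + 1 = m := by omega
    rw [hidx] at e
    have hc : ((m-1:ℕ):ℝ) = (m:ℝ) - 1 := by
      push_cast [Nat.cast_sub h1]; ring
    rw [hc] at e
    have hb1 : 0 < bb n m (m-1) := bb_pos h1 h2 (by omega)
    have hNr : (0:ℝ) < (n:ℝ) - m := by
      have : (m:ℝ) < n := by exact_mod_cast h2
      linarith
    have hm : (0:ℝ) < m := by exact_mod_cast h1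
    -- e : bb m * (((m-1)+1) * Nr) = bb (m-1) * ((n-(m-1)) * m)
    -- i.e. bb m * (m * Nr) = bb (m-1) * ((Nr+1) * m)
    have h7 : m + 0 = m := by omega
    have h8 : m - 1 - 0 = m - 1 := by omega
    rw [h7, h8]
    have e2 : bb n m m * ((n:ℝ)-m) = bb n m (m-1) * ((n:ℝ)-m+1) := by
      apply mul_right_cancel₀ hm.ne'
      linear_combination e
    nlinarith [e2, hb1, hNr]
  | succ j IH =>
    intro hjm hjn hcond
    have hNr : (0:ℝ) < (n:ℝ) - m := by
      have : (m:ℝ) < n := by exact_mod_cast h2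
      linarith
    have hm : (0:ℝ) < m := by exact_mod_cast h1
    set Nr : ℝ := (n:ℝ) - m with hNrdef
    -- downward closure of the condition
    have hcond' : ((j:ℝ))^2*((m:ℝ)^2-Nr^2) ≤ (m:ℝ)^2*(2*Nr+1) := by
      rcases le_or_gt ((m:ℝ)^2 - Nr^2) 0 with h | h
      · nlinarith [sq_nonneg (j:ℝ), sq_nonneg (m:ℝ)]
      · have : ((j:ℝ))^2 ≤ ((j:ℝ)+1)^2 := by nlinarith [Nat.cast_nonneg (α := ℝ) j]
        push_cast at hcond ⊢
        nlinarith
    have hIH := IH (by omega) (by omega) hcond'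
    -- ratio identities
    have e1 := rat h1 h2 (k := m-2-j) (by omega)
    have e2 := rat h1 h2 (k := m+j) (by omega)
    have hi1 : m - 2 - j + 1 = m - 1 - j := by omega
    rw [hi1] at e1
    have hc1 : ((m-2-j:ℕ):ℝ) = (m:ℝ) - 2 - j := by
      have h' : m - 2 - j = m - (j+2) := by omega
      rw [h']
      push_cast [Nat.cast_sub (by omega : j + 2 ≤ m)]; ring
    rw [hc1] at e1
    push_cast at e2
    -- abbreviations
    have hb1 : 0 < bb n m (m-1-j) := bb_pos h1 h2 (by omega)
    have hb2 : 0 < bb n m (m+j) := bb_pos h1 h2 (by omega)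
    have hb3 : 0 < bb n m (m-2-j) := bb_pos h1 h2 (by omega)
    have hb4 : 0 < bb n m (m+j+1) := bb_pos h1 h2 (by omega)
    have hA1 : (0:ℝ) < ((m:ℝ)-1-j) * Nr := by
      have : (j:ℝ) + 2 ≤ m := by exact_mod_cast (by push_cast; exact_mod_cast Nat.cast_le.mpr hjm : ((j+2:ℕ):ℝ) ≤ (m:ℝ))
      nlinarith
    have hA2 : (0:ℝ) < (Nr+2+j) * m := by positivity
    have hA3 : (0:ℝ) < ((m:ℝ)+j+1) * Nr := by positivity
    have hA4 : (0:ℝ) < (Nr-j) * m := by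
      have : (m:ℝ) + j + 1 ≤ n := by exact_mod_cast (by push_cast; exact_mod_cast Nat.cast_le.mpr hjn : ((m+(j+1):ℕ):ℝ) ≤ (n:ℝ))
      have : (j:ℝ) < Nr := by simp only [hNrdef]; linarith
      nlinarith
    -- coefficient inequality from the condition
    have hcondr : (((j:ℝ)+1))^2*((m:ℝ)^2-Nr^2) ≤ (m:ℝ)^2*(2*Nr+1) := by
      push_cast at hcond
      exact hcond
    have hcoef : ((m:ℝ)-1-j)*Nr * (((m:ℝ)+j+1)*Nr) ≤ (Nr+2+j)*m * ((Nr-j)*m) := by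
      have expand : (Nr+2+j)*m*((Nr-j)*m) - ((m:ℝ)-1-j)*Nr*(((m:ℝ)+j+1)*Nr)
          = (m:ℝ)^2*(2*Nr+1) - ((j:ℝ)+1)^2*((m:ℝ)^2-Nr^2) := by ring
      linarith [hcondr, expand]
    -- e1 : bb (m-1-j) * ((m-2-j+1) * Nr) = bb (m-2-j) * ((n-(m-2-j)) * m)
    have e1' : bb n m (m-1-j) * (((m:ℝ)-1-j) * Nr) = bb n m (m-2-j) * ((Nr+2+j) * m) := by
      have : (m:ℝ) - 2 - j + 1 = (m:ℝ)-1-j := by ring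
      rw [this] at e1
      have : (n:ℝ) - ((m:ℝ) - 2 - j) = Nr + 2 + j := by simp only [hNrdef]; ring
      rw [this] at e1
      exact e1
    have e2' : bb n m (m+j+1) * (((m:ℝ)+j+1) * Nr) = bb n m (m+j) * ((Nr-j) * m) := by
      have h5 : ((m:ℝ)+j) + 1 = (m:ℝ)+j+1 := by ring
      have h6 : (n:ℝ) - ((m:ℝ)+j) = Nr - j := by simp only [hNrdef]; ring
      rw [h5, h6] at e2
      exact e2
    -- the comparison
    have key : bb n m (m-2-j) * (((Nr+2+j)*m) * (((m:ℝ)+j+1)*Nr))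
        < bb n m (m+j+1) * (((Nr+2+j)*m) * (((m:ℝ)+j+1)*Nr)) := by
      have s1 : bb n m (m-2-j) * (((Nr+2+j)*m) * (((m:ℝ)+j+1)*Nr))
          = (bb n m (m-1-j) * (((m:ℝ)-1-j) * Nr)) * (((m:ℝ)+j+1)*Nr) := by
        rw [e1']; ring
      have s2 : (bb n m (m-1-j) * (((m:ℝ)-1-j) * Nr)) * (((m:ℝ)+j+1)*Nr)
          < (bb n m (m+j) * (((m:ℝ)-1-j) * Nr)) * (((m:ℝ)+j+1)*Nr) := by
        apply mul_lt_mul_of_pos_right _ hA3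
        exact mul_lt_mul_of_pos_right hIH hA1
      have s3 : (bb n m (m+j) * (((m:ℝ)-1-j) * Nr)) * (((m:ℝ)+j+1)*Nr)
          ≤ bb n m (m+j) * ((Nr-j)*m) * ((Nr+2+j)*m) := by
        have h9 := mul_le_mul_of_nonneg_left hcoef hb2.le
        calc (bb n m (m+j) * (((m:ℝ)-1-j) * Nr)) * (((m:ℝ)+j+1)*Nr)
            = bb n m (m+j) * (((m:ℝ)-1-j)*Nr * (((m:ℝ)+j+1)*Nr)) := by ring
          _ ≤ bb n m (m+j) * ((Nr+2+j)*m * ((Nr-j)*m)) := h9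
          _ = bb n m (m+j) * ((Nr-j)*m) * ((Nr+2+j)*m) := by ring
      have s4 : bb n m (m+j) * ((Nr-j)*m) * ((Nr+2+j)*m)
          = bb n m (m+j+1) * (((Nr+2+j)*m) * (((m:ℝ)+j+1)*Nr)) := by
        rw [← e2']; ring
      calc bb n m (m-2-j) * (((Nr+2+j)*m) * (((m:ℝ)+j+1)*Nr))
          = (bb n m (m-1-j) * (((m:ℝ)-1-j) * Nr)) * (((m:ℝ)+j+1)*Nr) := s1
        _ < (bb n m (m+j) * (((m:ℝ)-1-j) * Nr)) * (((m:ℝ)+j+1)*Nr) := s2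
        _ ≤ bb n m (m+j) * ((Nr-j)*m) * ((Nr+2+j)*m) := s3
        _ = bb n m (m+j+1) * (((Nr+2+j)*m) * (((m:ℝ)+j+1)*Nr)) := s4
    have hidx2 : m - 1 - (j+1) = m - 2 - j := by omega
    have hidx3 : m + (j+1) = m + j + 1 := by omega
    rw [hidx2, hidx3]
    exact (mul_lt_mul_iff_of_pos_right (mul_pos hA2 hA3)).mp key

lemma mass' (n' : ℕ) (x : ℝ) :
    ∑ k ∈ Finset.range (n'+1), (n'.choose k : ℝ) * x^k * (1-x)^(n'-k) = 1 := by
  calc ∑ k ∈ Finset.range (n'+1), (n'.choose k : ℝ) * x^k * (1-x)^(n'-k)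
      = ∑ k ∈ Finset.range (n'+1), x^k * (1-x)^(n'-k) * (n'.choose k : ℝ) :=
        Finset.sum_congr rfl (fun k _ => by ring)
    _ = (x + (1-x))^n' := (add_pow x (1-x) n').symm
    _ = 1 := by rw [add_sub_cancel, one_pow]

lemma mass : ∑ k ∈ Finset.range (n+1), bb n m k = 1 := mass' n ((m:ℝ)/n)

lemma mean (h1 : 1 ≤ m) (h2 : m < n) :
    ∑ k ∈ Finset.range (n+1), (k:ℝ) * bb n m k = m := by
  have hn : (0:ℝ) < n := by
    have : 0 < n := by omega
    exact_mod_cast this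
  set x : ℝ := (m:ℝ)/n with hx
  have step : ∀ i ∈ Finset.range n,
      ((i:ℝ)+1) * bb n m (i+1) = (n:ℝ) * x * ((((n-1).choose i : ℝ)) * x^i * (1-x)^((n-1)-i)) := by
    intro i hi
    have hi' : i < n := Finset.mem_range.mp hi
    have hch : ((n:ℝ)) * ((n-1).choose i : ℝ) = ((n.choose (i+1)) : ℝ) * ((i:ℝ)+1) := by
      have h := Nat.add_one_mul_choose_eq (n-1) i
      have h' : n - 1 + 1 = n := by omega
      rw [h'] at h
      have := congrArg (Nat.cast (R := ℝ)) h
      push_cast at this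
      linarith [this]
    have hexp : n - (i+1) = (n-1) - i := by omega
    unfold bb
    rw [hexp, pow_succ]
    rw [hx]
    linear_combination (-(((m:ℝ)/n)^i * ((m:ℝ)/n) * (1-(m:ℝ)/n)^((n-1)-i))) * hch
  rw [Finset.sum_range_succ' (fun k => (k:ℝ) * bb n m k) n]
  simp only [Nat.cast_zero, zero_mul, add_zero]
  have : ∑ i ∈ Finset.range n, ((i:ℝ)+1) * bb n m (i+1)
      = (n:ℝ) * x * ∑ i ∈ Finset.range n, (((n-1).choose i : ℝ)) * x^i * (1-x)^((n-1)-i) := by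
    rw [Finset.mul_sum]
    exact Finset.sum_congr rfl step
  have hrange : n = (n-1) + 1 := by omega
  have hmass : ∑ i ∈ Finset.range n, (((n-1).choose i : ℝ)) * x^i * (1-x)^((n-1)-i) = 1 := by
    rw [hrange]
    exact mass' (n-1) x
  have hconv : ∀ i : ℕ, ((i:ℝ)+1) = (((i+1):ℕ):ℝ) := by intro i; push_cast; ring
  calc ∑ i ∈ Finset.range n, (((i+1):ℕ):ℝ) * bb n m (i+1)
      = ∑ i ∈ Finset.range n, ((i:ℝ)+1) * bb n m (i+1) := by
        exact Finset.sum_congr rfl (fun i _ => by rw [← hconv])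
    _ = (n:ℝ) * x * 1 := by rw [this, hmass]
    _ = m := by rw [hx]; field_simp

/-- auxiliary: d-sequence -/
noncomputable def dd (n m : ℕ) (j : ℕ) : ℝ :=
  bb n m (m+j) - (if j < m then bb n m (m-1-j) else 0)

/-- if the pair is in range and the condition fails at i+1, negativity propagates -/
lemma step_neg (h1 : 1 ≤ m) (h2 : m < n) {i : ℕ} (hi1 : i + 1 + 1 ≤ m) (hi2 : m + i + 1 ≤ n)
    (hneg : bb n m (m+i) < bb n m (m-1-i))
    (hnc : ¬ (((i:ℝ)+1)^2*((m:ℝ)^2-((n:ℝ)-m)^2) ≤ (m:ℝ)^2*(2*((n:ℝ)-m)+1))) :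
    bb n m (m+i+1) < bb n m (m-2-i) := by
  have hNr : (0:ℝ) < (n:ℝ) - m := by
    have : (m:ℝ) < n := by exact_mod_cast h2
    linarith
  have hm : (0:ℝ) < m := by exact_mod_cast h1
  set Nr : ℝ := (n:ℝ) - m with hNrdef
  have e1 := rat h1 h2 (k := m-2-i) (by omega)
  have e2 := rat h1 h2 (k := m+i) (by omega)
  have hi1' : m - 2 - i + 1 = m - 1 - i := by omega
  rw [hi1'] at e1
  have hc1 : ((m-2-i:ℕ):ℝ) = (m:ℝ) - 2 - i := by
    have h' : m - 2 - i = m - (i+2) := by omega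
    rw [h']
    push_cast [Nat.cast_sub (by omega : i + 2 ≤ m)]; ring
  rw [hc1] at e1
  push_cast at e2
  have hb1 : 0 < bb n m (m-1-i) := bb_pos h1 h2 (by omega)
  have hb2 : 0 < bb n m (m+i) := bb_pos h1 h2 (by omega)
  have hA1 : (0:ℝ) < ((m:ℝ)-1-i) * Nr := by
    have : ((i:ℝ)) + 2 ≤ m := by
      have : ((i+2:ℕ):ℝ) ≤ (m:ℝ) := Nat.cast_le.mpr (by omega)
      push_cast at this; linarith
    nlinarith
  have hA2 : (0:ℝ) < (Nr+2+i) * m := by positivity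
  have hA3 : (0:ℝ) < ((m:ℝ)+i+1) * Nr := by positivity
  have hA4 : (0:ℝ) < (Nr-i) * m := by
    have : ((m+(i+1):ℕ):ℝ) ≤ (n:ℝ) := Nat.cast_le.mpr hi2
    push_cast at this
    have : (i:ℝ) < Nr := by rw [hNrdef]; linarith
    nlinarith
  -- reversed coefficient inequality
  have hcoef : (Nr+2+i)*m * ((Nr-i)*m) < ((m:ℝ)-1-i)*Nr * (((m:ℝ)+i+1)*Nr) := by
    push_cast at hnc
    have h' : (m:ℝ)^2*(2*Nr+1) < ((i:ℝ)+1)^2*((m:ℝ)^2-Nr^2) := by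
      rw [hNrdef]; exact lt_of_not_ge hnc
    nlinarith [h']
  have e1' : bb n m (m-1-i) * (((m:ℝ)-1-i) * Nr) = bb n m (m-2-i) * ((Nr+2+i) * m) := by
    have hr1 : (m:ℝ) - 2 - i + 1 = (m:ℝ)-1-i := by ring
    rw [hr1] at e1
    have hr2 : (n:ℝ) - ((m:ℝ) - 2 - i) = Nr + 2 + i := by rw [hNrdef]; ring
    rw [hr2] at e1
    exact e1
  have e2' : bb n m (m+i+1) * (((m:ℝ)+i+1) * Nr) = bb n m (m+i) * ((Nr-i) * m) := by
    have h5 : ((m:ℝ)+i) + 1 = (m:ℝ)+i+1 := by ring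
    have h6 : (n:ℝ) - ((m:ℝ)+i) = Nr - i := by rw [hNrdef]; ring
    rw [h5, h6] at e2
    exact e2
  have key : bb n m (m+i+1) * ((((m:ℝ)+i+1)*Nr) * ((Nr+2+i)*m))
      < bb n m (m-2-i) * ((((m:ℝ)+i+1)*Nr) * ((Nr+2+i)*m)) := by
    calc bb n m (m+i+1) * ((((m:ℝ)+i+1)*Nr) * ((Nr+2+i)*m))
        = (bb n m (m+i) * ((Nr-i)*m)) * ((Nr+2+i)*m) := by rw [← e2']; ring
      _ = bb n m (m+i) * ((Nr+2+i)*m * ((Nr-i)*m)) := by ring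
      _ < bb n m (m+i) * (((m:ℝ)-1-i)*Nr * (((m:ℝ)+i+1)*Nr)) := by
          exact mul_lt_mul_of_pos_left hcoef hb2
      _ ≤ bb n m (m-1-i) * (((m:ℝ)-1-i)*Nr * (((m:ℝ)+i+1)*Nr)) := by
          apply mul_le_mul_of_nonneg_right hneg.le
          positivity
      _ = (bb n m (m-1-i) * (((m:ℝ)-1-i) * Nr)) * (((m:ℝ)+i+1)*Nr) := by ring
      _ = (bb n m (m-2-i) * ((Nr+2+i) * m)) * (((m:ℝ)+i+1)*Nr) := by rw [e1']
      _ = bb n m (m-2-i) * ((((m:ℝ)+i+1)*Nr) * ((Nr+2+i)*m)) := by ring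
  exact (mul_lt_mul_iff_of_pos_right (mul_pos hA3 hA2)).mp key

/-- single crossing of the d-sequence -/
lemma cross (h1 : 1 ≤ m) (h2 : m < n) :
    ∃ J : ℕ, (∀ j, j < J → 0 ≤ dd n m j) ∧ (∀ j, J ≤ j → dd n m j ≤ 0) := by
  have hNr : (0:ℝ) < (n:ℝ) - m := by
    have : (m:ℝ) < n := by exact_mod_cast h2
    linarith
  have hm : (0:ℝ) < m := by exact_mod_cast h1
  -- case split on m vs N+1
  by_cases hcase : 2*m ≤ n+1
  · -- m ≤ N+1 : all d ≥ 0 up to the end; use a big J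
    refine ⟨m + n + 1, fun j _ => ?_, fun j hj => ?_⟩
    · -- d j ≥ 0
      by_cases hjm : j < m
      · have hcond : ((j:ℝ))^2*((m:ℝ)^2-((n:ℝ)-m)^2) ≤ (m:ℝ)^2*(2*((n:ℝ)-m)+1) := by
          have hjmr : (j:ℝ) < (m:ℝ) := by exact_mod_cast hjm
          have hmr : 2*(m:ℝ) ≤ (n:ℝ)+1 := by
            have : ((2*m:ℕ):ℝ) ≤ ((n+1:ℕ):ℝ) := Nat.cast_le.mpr hcase
            push_cast at this; linarith
          rcases le_or_gt ((m:ℝ)^2 - ((n:ℝ)-m)^2) 0 with h | h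
          · nlinarith [sq_nonneg (j:ℝ)]
          · have hf1 : (0:ℝ) ≤ ((m:ℝ)^2 - (j:ℝ)^2) := by nlinarith [Nat.cast_nonneg (α := ℝ) j]
            have hf2 : (0:ℝ) ≤ (2*((n:ℝ)-m)+1) - ((m:ℝ)^2-((n:ℝ)-m)^2) := by nlinarith
            nlinarith [mul_nonneg h.le hf1, mul_nonneg (sq_nonneg (m:ℝ)) hf2]
        have := chain h1 h2 j (by omega) (by omega) hcond
        unfold dd
        rw [if_pos hjm]
        linarith
      · unfold dd
        rw [if_neg hjm]
        simpa using bb_nonneg h1 h2 (m+j)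
    · -- tail zero
      unfold dd
      rw [if_neg (by omega)]
      rw [bb_zero (by omega)]
      simp
  · -- m ≥ N+2 : find first negative if any
    by_cases hex : ∃ j, dd n m j < 0
    · set J := Nat.find hex with hJ
      refine ⟨J, fun j hj => ?_, fun j hj => ?_⟩
      · exact le_of_not_gt (Nat.find_min hex hj)
      · -- j ≥ J implies d j ≤ 0
        have hdJ : dd n m J < 0 := Nat.find_spec hex
        have hJm : J < m := by
          by_contra hJm
          unfold dd at hdJ
          rw [if_neg hJm] at hdJ
          have := bb_nonneg h1 h2 (m+J)
          linarith
        -- main propagation for in-range indices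
        have main : ∀ i, J ≤ i → i < m → m + i ≤ n → bb n m (m+i) < bb n m (m-1-i) := by
          intro i hJi
          induction i, hJi using Nat.le_induction with
          | base =>
            intro him hin
            have h' := hdJ
            unfold dd at h'
            rw [if_pos hJm] at h'
            linarith
          | succ i hJi IH =>
            intro him hin
            have hprev : bb n m (m+i) < bb n m (m-1-i) := IH (by omega) (by omega)
            by_cases hco : (((i:ℝ)+1)^2*((m:ℝ)^2-((n:ℝ)-m)^2) ≤ (m:ℝ)^2*(2*((n:ℝ)-m)+1))
            · -- condition holds at i+1, hence at i, contradiction with hprev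
              exfalso
              have hcond' : ((i:ℝ))^2*((m:ℝ)^2-((n:ℝ)-m)^2) ≤ (m:ℝ)^2*(2*((n:ℝ)-m)+1) := by
                rcases le_or_gt ((m:ℝ)^2 - ((n:ℝ)-m)^2) 0 with h | h
                · nlinarith [sq_nonneg (j:ℝ), sq_nonneg (i:ℝ)]
                · have : ((i:ℝ))^2 ≤ ((i:ℝ)+1)^2 := by nlinarith [Nat.cast_nonneg (α := ℝ) i]
                  nlinarith
              have := chain h1 h2 i (by omega) (by omega) hcond'
              linarith
            · have := step_neg h1 h2 (by omega) (by omega) hprev hco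
              have hidx : m - 1 - (i+1) = m - 2 - i := by omega
              have hidx2 : m + (i+1) = m + i + 1 := by omega
              rw [hidx, hidx2]
              exact this
        -- now conclude d j ≤ 0 for all j ≥ J
        by_cases hjm : j < m
        · by_cases hjn : m + j ≤ n
          · have := main j hj hjm hjn
            unfold dd
            rw [if_pos hjm]
            linarith
          · unfold dd
            rw [if_pos hjm, bb_zero (by omega)]
            have := bb_nonneg h1 h2 (m-1-j)
            linarith
        · unfold dd
          rw [if_neg hjm, bb_zero (by omega)]
          simp
    · push_neg at hex
      exact ⟨m + n + 1, fun j _ => hex j, fun j hj => by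
        unfold dd
        rw [if_neg (by omega), bb_zero (by omega)]
        simp⟩

/-- the binomial median theorem -/
theorem median (h1 : 1 ≤ m) (h2 : m < n) :
    (1:ℝ)/2 ≤ ∑ k ∈ (Finset.range (n+1)).filter (fun k => m ≤ k), bb n m k := by
  classical
  set A : ℝ := ∑ k ∈ (Finset.range (n+1)).filter (fun k => m ≤ k), bb n m k with hA
  set B : ℝ := ∑ k ∈ (Finset.range (n+1)).filter (fun k => ¬ m ≤ k), bb n m k with hB
  have hfilter1 : (Finset.range (n+1)).filter (fun k => m ≤ k) = Finset.Ico m (n+1) := by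
    ext k; simp only [Finset.mem_filter, Finset.mem_range, Finset.mem_Ico]; omega
  have hfilter2 : (Finset.range (n+1)).filter (fun k => ¬ m ≤ k) = Finset.range m := by
    ext k; simp only [Finset.mem_filter, Finset.mem_range]; omega
  have hAB : A + B = 1 := by
    rw [hA, hB, Finset.sum_filter_add_sum_filter_not]
    exact mass
  have hBr : B = ∑ k ∈ Finset.range m, bb n m k := by rw [hB, hfilter2]
  have hBpos : 0 < B := by
    rw [hBr]
    apply Finset.sum_pos
    · intro k hk
      exact bb_pos h1 h2 (by have := Finset.mem_range.mp hk; omega)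
    · exact ⟨0, Finset.mem_range.mpr (by omega)⟩
  -- sum of bb (m+j)
  have SA : ∑ j ∈ Finset.range (n+1), bb n m (m+j) = A := by
    rw [hA, hfilter1, Finset.sum_Ico_eq_sum_range]
    have hsub : Finset.range (n+1-m) ⊆ Finset.range (n+1) := by
      apply Finset.range_subset_range.mpr; omega
    rw [Finset.sum_subset hsub]
    intro j _ hj
    exact bb_zero (by simp only [Finset.mem_range] at hj; omega)
  -- sum of the ite part
  have hfilter3 : (Finset.range (n+1)).filter (fun j => j < m) = Finset.range m := by
    ext k; simp only [Finset.mem_filter, Finset.mem_range]; omega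
  have SL : ∑ j ∈ Finset.range (n+1), (if j < m then bb n m (m-1-j) else 0) = B := by
    rw [Finset.sum_ite, Finset.sum_const_zero, add_zero, hfilter3, hBr]
    exact Finset.sum_range_reflect (fun k => bb n m k) m
  have Sd : ∑ j ∈ Finset.range (n+1), dd n m j = A - B := by
    unfold dd
    rw [Finset.sum_sub_distrib, SA, SL]
  -- weighted sums
  have M1 := mean h1 h2
  have Msplit : ∑ k ∈ Finset.range m, (k:ℝ) * bb n m k
      + ∑ k ∈ Finset.Ico m (n+1), (k:ℝ) * bb n m k = (m:ℝ) := by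
    rw [← M1, Finset.range_eq_Ico, Finset.range_eq_Ico, ← Finset.sum_Ico_consecutive _ (by omega : 0 ≤ m) (by omega : m ≤ n+1)]
  have SjR : ∑ j ∈ Finset.range (n+1), (j:ℝ) * bb n m (m+j)
      = (m:ℝ) - (m:ℝ)*A - ∑ k ∈ Finset.range m, (k:ℝ) * bb n m k := by
    have e1 : ∑ k ∈ Finset.Ico m (n+1), (k:ℝ) * bb n m k
        = ∑ j ∈ Finset.range (n+1), ((m:ℝ)+j) * bb n m (m+j) := by
      rw [Finset.sum_Ico_eq_sum_range]
      rw [Finset.sum_subset (by apply Finset.range_subset_range.mpr; omega :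
            Finset.range (n+1-m) ⊆ Finset.range (n+1))]
      · exact Finset.sum_congr rfl (fun j _ => by push_cast; ring)
      · intro j _ hj
        rw [bb_zero (by simp only [Finset.mem_range] at hj; omega)]
        ring
    have e2 : ∑ j ∈ Finset.range (n+1), ((m:ℝ)+j) * bb n m (m+j)
        = (m:ℝ) * A + ∑ j ∈ Finset.range (n+1), (j:ℝ) * bb n m (m+j) := by
      rw [← SA, Finset.mul_sum, ← Finset.sum_add_distrib]
      exact Finset.sum_congr rfl (fun j _ => by ring)
    have := Msplit
    rw [e1, e2] at this
    linarith
  have SjL : ∑ j ∈ Finset.range (n+1), (j:ℝ) * (if j < m then bb n m (m-1-j) else 0)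
      = ∑ k ∈ Finset.range m, ((m:ℝ)-1-k) * bb n m k := by
    have e1 : ∑ j ∈ Finset.range (n+1), (j:ℝ) * (if j < m then bb n m (m-1-j) else 0)
        = ∑ j ∈ Finset.range m, (j:ℝ) * bb n m (m-1-j) := by
      rw [← hfilter3, Finset.sum_filter]
      exact Finset.sum_congr rfl (fun j _ => by rw [mul_ite, mul_zero])
    rw [e1]
    have e2 := Finset.sum_range_reflect (fun k => ((m:ℝ)-1-k) * bb n m k) m
    rw [← e2]
    apply Finset.sum_congr rfl
    intro j hj
    have hjm : j < m := Finset.mem_range.mp hj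
    have hc : ((m-1-j:ℕ):ℝ) = (m:ℝ)-1-j := by
      have h' : m-1-j = m - (j+1) := by omega
      rw [h']
      push_cast [Nat.cast_sub (by omega : j+1 ≤ m)]; ring
    rw [hc]
    ring_nf
  have Sjd : ∑ j ∈ Finset.range (n+1), (j:ℝ) * dd n m j = B := by
    unfold dd
    have expand : ∀ j ∈ Finset.range (n+1),
        (j:ℝ) * (bb n m (m+j) - (if j < m then bb n m (m-1-j) else 0))
        = (j:ℝ) * bb n m (m+j) - (j:ℝ) * (if j < m then bb n m (m-1-j) else 0) := by
      intro j _; ring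
    rw [Finset.sum_congr rfl expand, Finset.sum_sub_distrib, SjR, SjL]
    have hsum : ∑ k ∈ Finset.range m, (k:ℝ)*bb n m k + ∑ k ∈ Finset.range m, ((m:ℝ)-1-k)*bb n m k
        = ((m:ℝ)-1) * B := by
      rw [← Finset.sum_add_distrib, hBr, Finset.mul_sum]
      exact Finset.sum_congr rfl (fun k _ => by ring)
    have hB1 : B = 1 - A := by linarith
    have hmb : (m:ℝ)*B = (m:ℝ) - (m:ℝ)*A := by rw [hB1]; ring
    have hmb2 : ((m:ℝ)-1)*B = (m:ℝ)*B - B := by ring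
    linarith [hsum, hmb, hmb2]
  -- multiplier argument
  obtain ⟨J, hJ1, hJ2⟩ := cross h1 h2
  have hM : ∑ j ∈ Finset.range (n+1), ((j:ℝ) - (J:ℝ)) * dd n m j ≤ 0 := by
    apply Finset.sum_nonpos
    intro j _
    rcases lt_or_ge j J with h | h
    · apply mul_nonpos_iff.mpr
      right
      constructor
      · have : (j:ℝ) ≤ (J:ℝ) := by exact_mod_cast h.le
        linarith
      · exact hJ1 j h
    · apply mul_nonpos_iff.mpr
      left
      constructor
      · have : (J:ℝ) ≤ (j:ℝ) := by exact_mod_cast h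
        linarith
      · exact hJ2 j h
  have hMx : B - (J:ℝ) * (A - B) ≤ 0 := by
    have e : ∑ j ∈ Finset.range (n+1), ((j:ℝ) - (J:ℝ)) * dd n m j
        = (∑ j ∈ Finset.range (n+1), (j:ℝ) * dd n m j)
          - (J:ℝ) * ∑ j ∈ Finset.range (n+1), dd n m j := by
      rw [Finset.mul_sum, ← Finset.sum_sub_distrib]
      exact Finset.sum_congr rfl (fun j _ => by ring)
    rw [e, Sjd, Sd] at hM
    exact hM
  by_contra hcon
  push_neg at hcon
  have hBval : 1/2 < B := by linarith
  have hABneg : A - B ≤ 0 := by linarith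
  have : (J:ℝ) * (A - B) ≤ 0 :=
    mul_nonpos_iff.mpr (Or.inl ⟨Nat.cast_nonneg J, hABneg⟩)
  linarith

end JSbin

namespace JSpb


variable {K S : ℕ}

noncomputable def FF (S : ℕ) (p : Fin K → ℝ) : ℝ :=
  ∑ I ∈ Finset.univ.filter (fun I : Finset (Fin K) => S ≤ I.card), bernoulliP p I

lemma bernoulliP_nonneg {p : Fin K → ℝ} (hp : ∀ i, 0 ≤ p i ∧ p i ≤ 1) (I : Finset (Fin K)) :
    0 ≤ bernoulliP p I := by
  unfold bernoulliP
  apply mul_nonneg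
  · exact Finset.prod_nonneg (fun i _ => (hp i).1)
  · exact Finset.prod_nonneg (fun i _ => by linarith [(hp i).2])

lemma mass (p : Fin K → ℝ) : ∑ I : Finset (Fin K), bernoulliP p I = 1 := by
  classical
  have h := Finset.prod_add (fun i => p i) (fun i => 1 - p i) (Finset.univ : Finset (Fin K))
  have h1 : ∏ i : Fin K, (p i + (1 - p i)) = 1 := by
    rw [Finset.prod_congr rfl (fun i _ => by ring : ∀ i ∈ Finset.univ, p i + (1 - p i) = (1:ℝ))]
    simp
  rw [h1] at h
  rw [← Finset.powerset_univ]
  rw [h]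
  apply Finset.sum_congr rfl
  intro I _
  unfold bernoulliP
  rw [Finset.compl_eq_univ_sdiff]

lemma FF_le_one {p : Fin K → ℝ} (hp : ∀ i, 0 ≤ p i ∧ p i ≤ 1) : FF S p ≤ 1 := by
  unfold FF
  rw [← mass p]
  exact Finset.sum_le_sum_of_subset_of_nonneg (Finset.filter_subset _ _)
    (fun I _ _ => bernoulliP_nonneg hp I)

/-- pointwise affinity of the weight in each coordinate -/
lemma bernoulliP_update (p : Fin K → ℝ) (i : Fin K) (x : ℝ) (I : Finset (Fin K)) :
    bernoulliP (Function.update p i x) I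
      = x * bernoulliP (Function.update p i 1) I
        + (1-x) * bernoulliP (Function.update p i 0) I := by
  classical
  unfold bernoulliP
  by_cases hi : i ∈ I
  · have hic : i ∉ Iᶜ := by simp [hi]
    have hcompl : ∀ (c : ℝ), ∏ j ∈ Iᶜ, (1 - Function.update p i c j) = ∏ j ∈ Iᶜ, (1 - p j) := by
      intro c
      apply Finset.prod_congr rfl
      intro j hj
      rw [Function.update_of_ne (by rintro rfl; exact hic hj) _ _]
    have hprod : ∀ (c : ℝ), ∏ j ∈ I, Function.update p i c j = c * ∏ j ∈ I \ {i}, p j := by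
      intro c
      exact Finset.prod_update_of_mem hi _ _
    rw [hprod x, hprod 1, hprod 0, hcompl x, hcompl 1, hcompl 0]
    ring
  · have hic : i ∈ Iᶜ := by simp [hi]
    have hprod : ∀ (c : ℝ), ∏ j ∈ I, Function.update p i c j = ∏ j ∈ I, p j := by
      intro c
      apply Finset.prod_congr rfl
      intro j hj
      rw [Function.update_of_ne (by rintro rfl; exact hi hj) _ _]
    have hcompl : ∀ (c : ℝ), ∏ j ∈ Iᶜ, (1 - Function.update p i c j)
        = (1-c) * ∏ j ∈ Iᶜ \ {i}, (1 - p j) := by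
      intro c
      have hfun : ∀ j, 1 - Function.update p i c j = Function.update (fun j => 1 - p j) i (1-c) j := by
        intro j
        by_cases h : j = i
        · subst h; simp
        · simp [Function.update_of_ne h]
      rw [Finset.prod_congr rfl (fun j _ => hfun j)]
      exact Finset.prod_update_of_mem hic _ _
    rw [hprod x, hprod 1, hprod 0, hcompl x, hcompl 1, hcompl 0]
    ring

lemma FF_update (p : Fin K → ℝ) (i : Fin K) (x : ℝ) :
    FF S (Function.update p i x)
      = x * FF S (Function.update p i 1) + (1-x) * FF S (Function.update p i 0) := by
  unfold FF
  rw [Finset.mul_sum, Finset.mul_sum, ← Finset.sum_add_distrib]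
  exact Finset.sum_congr rfl (fun I _ => bernoulliP_update p i x I)

/-- invariance under permutations -/
lemma FF_perm (p : Fin K → ℝ) (σ : Equiv.Perm (Fin K)) :
    FF S (p ∘ σ) = FF S p := by
  classical
  unfold FF
  apply Finset.sum_nbij' (i := fun I => Finset.image σ I) (j := fun I => Finset.image σ.symm I)
  · intro I hI
    simp only [Finset.mem_filter, Finset.mem_univ, true_and] at hI ⊢
    rwa [Finset.card_image_of_injective _ σ.injective]
  · intro I hI
    simp only [Finset.mem_filter, Finset.mem_univ, true_and] at hI ⊢
    rwa [Finset.card_image_of_injective _ σ.symm.injective]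
  · intro I _
    ext k
    simp only [Finset.mem_image]
    constructor
    · rintro ⟨a, ⟨b, hb, rfl⟩, rfl⟩
      simpa using hb
    · intro hk
      exact ⟨σ k, ⟨k, hk, rfl⟩, by simp⟩
  · intro I _
    ext k
    simp only [Finset.mem_image]
    constructor
    · rintro ⟨a, ⟨b, hb, rfl⟩, rfl⟩
      simpa using hb
    · intro hk
      exact ⟨σ.symm k, ⟨k, hk, rfl⟩, by simp⟩
  · intro I _
    unfold bernoulliP
    have h1 : ∏ j ∈ Finset.image σ I, p j = ∏ i ∈ I, p (σ i) :=
      Finset.prod_image (fun a _ b _ h => σ.injective h)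
    have hcompl : (Finset.image σ I)ᶜ = Finset.image σ Iᶜ := by
      ext k
      simp only [Finset.mem_compl, Finset.mem_image]
      constructor
      · intro hk
        exact ⟨σ.symm k, fun hc => hk ⟨σ.symm k, hc, by simp⟩, by simp⟩
      · rintro ⟨a, ha, rfl⟩ 
        rintro ⟨b, hb, hba⟩
        exact ha (by rwa [σ.injective hba] at hb)
    have h2 : ∏ j ∈ (Finset.image σ I)ᶜ, (1 - p j) = ∏ i ∈ Iᶜ, (1 - p (σ i)) := by
      rw [hcompl]
      exact Finset.prod_image (fun a _ b _ h => σ.injective h)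
    rw [h1, h2]
    rfl

/-- continuity -/
lemma FF_cont : Continuous (FF S : (Fin K → ℝ) → ℝ) := by
  unfold FF
  apply continuous_finset_sum
  intro I _
  unfold bernoulliP
  apply Continuous.mul
  · exact continuous_finset_prod _ (fun i _ => continuous_apply i)
  · exact continuous_finset_prod _ (fun i _ => continuous_const.sub (continuous_apply i))

/-- two-variable expansion along a fixed-sum line -/
lemma FF_line (q : Fin K → ℝ) {i j : Fin K} (hij : i ≠ j) (x y : ℝ) :
    FF S (Function.update (Function.update q i x) j y)
      = (1-x)*(1-y) * FF S (Function.update (Function.update q i 0) j 0)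
        + (x*(1-y) + y*(1-x)) * FF S (Function.update (Function.update q i 1) j 0)
        + x*y * FF S (Function.update (Function.update q i 1) j 1)
        + y*(1-x) * (FF S (Function.update (Function.update q i 0) j 1)
            - FF S (Function.update (Function.update q i 1) j 0)) := by
  have h1 := FF_update (S := S) (Function.update q i x) j y
  have comm : ∀ (a b : ℝ), Function.update (Function.update q i a) j b
      = Function.update (Function.update q j b) i a := fun a b => Function.update_comm hij a b q
  have h2 : FF S (Function.update (Function.update q i x) j (1:ℝ))
      = x * FF S (Function.update (Function.update q i 1) j 1)
        + (1-x) * FF S (Function.update (Function.update q i 0) j 1) := by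
    rw [comm x 1, comm 1 1, comm 0 1]
    exact FF_update (S := S) (Function.update q j 1) i x
  have h3 : FF S (Function.update (Function.update q i x) j (0:ℝ))
      = x * FF S (Function.update (Function.update q i 1) j 0)
        + (1-x) * FF S (Function.update (Function.update q i 0) j 0) := by
    rw [comm x 0, comm 1 0, comm 0 0]
    exact FF_update (S := S) (Function.update q j 0) i x
  rw [h1, h2, h3]
  ring

/-- the mixed terms agree by symmetry -/
lemma FF_mixed (q : Fin K → ℝ) {i j : Fin K} (hij : i ≠ j) :
    FF S (Function.update (Function.update q i 0) j 1)
      = FF S (Function.update (Function.update q i 1) j 0) := by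
  have key : Function.update (Function.update q i 0) j 1
      = (Function.update (Function.update q i 1) j 0) ∘ (Equiv.swap i j) := by
    funext k
    simp only [Function.comp_apply]
    by_cases hk : k = i
    · subst hk
      rw [Equiv.swap_apply_left, Function.update_of_ne hij, Function.update_self,
        Function.update_self]
    · by_cases hk' : k = j
      · subst hk'
        rw [Equiv.swap_apply_right, Function.update_self, Function.update_of_ne hij,
          Function.update_self]
      · rw [Equiv.swap_apply_of_ne_of_ne hk hk', Function.update_of_ne hk',
          Function.update_of_ne hk, Function.update_of_ne hk', Function.update_of_ne hk]
  rw [key, FF_perm]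

/-- the quadratic formula along the line -/
lemma FF_quad (q : Fin K → ℝ) {i j : Fin K} (hij : i ≠ j) (x : ℝ) :
    FF S (Function.update (Function.update q i x) j (q i + q j - x))
      = FF S (Function.update (Function.update q i 0) j 0)
        + (q i + q j) * (FF S (Function.update (Function.update q i 1) j 0)
            - FF S (Function.update (Function.update q i 0) j 0))
        + (x * (q i + q j - x)) *
          (FF S (Function.update (Function.update q i 0) j 0)
            + FF S (Function.update (Function.update q i 1) j 1)
            - 2 * FF S (Function.update (Function.update q i 1) j 0)) := by
  rw [FF_line q hij x (q i + q j - x), FF_mixed q hij]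
  ring

def Dom (K S : ℕ) : Set (Fin K → ℝ) := {p | (∀ i, 0 ≤ p i ∧ p i ≤ 1) ∧ ∑ i, p i = S}

lemma sum_cont : Continuous (fun p : Fin K → ℝ => ∑ i, p i) :=
  continuous_finset_sum _ (fun i _ => continuous_apply i)

lemma isCompact_Dom : IsCompact (Dom K S) := by
  have heq : Dom K S = Set.Icc (0 : Fin K → ℝ) 1 ∩ {p | ∑ i, p i = (S:ℝ)} := by
    ext r
    simp only [Dom, Set.mem_setOf_eq, Set.mem_inter_iff, Set.mem_Icc, Pi.le_def]
    constructor
    · rintro ⟨h1, h2⟩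
      exact ⟨⟨fun i => by simpa using (h1 i).1, fun i => by simpa using (h1 i).2⟩, h2⟩
    · rintro ⟨⟨h1, h2⟩, h3⟩
      exact ⟨fun i => ⟨by simpa using h1 i, by simpa using h2 i⟩, h3⟩
  rw [heq]
  exact IsCompact.inter_right isCompact_Icc (isClosed_eq sum_cont continuous_const)

lemma sum_update2 (q : Fin K → ℝ) {i j : Fin K} (hij : i ≠ j) (x y : ℝ) :
    ∑ k, Function.update (Function.update q i x) j y k
      = (∑ k, q k) - q i - q j + x + y := by
  classical
  rw [Finset.sum_update_of_mem (Finset.mem_univ j)]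
  have hi : i ∈ Finset.univ \ {j} := by simp [hij]
  rw [Finset.sum_update_of_mem hi]
  have e1 : (Finset.univ \ {j} : Finset (Fin K)) = Finset.univ.erase j := by
    rw [Finset.erase_eq]
  have e2 : ((Finset.univ \ {j}) \ {i} : Finset (Fin K)) = (Finset.univ.erase j).erase i := by
    rw [Finset.erase_eq, Finset.erase_eq]
  rw [e2]
  have h1 : ∑ k ∈ (Finset.univ.erase j).erase i, q k
      = (∑ k, q k) - q j - q i := by
    have a1 : q i + ∑ k ∈ (Finset.univ.erase j).erase i, q k = ∑ k ∈ Finset.univ.erase j, q k :=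
      Finset.add_sum_erase _ q (by simp [hij])
    have a2 : q j + ∑ k ∈ Finset.univ.erase j, q k = ∑ k, q k :=
      Finset.add_sum_erase _ q (Finset.mem_univ j)
    linarith
  rw [h1]
  ring

lemma sq_update2 (q : Fin K → ℝ) {i j : Fin K} (hij : i ≠ j) (x y : ℝ) :
    ∑ k, (Function.update (Function.update q i x) j y k)^2
      = (∑ k, (q k)^2) - (q i)^2 - (q j)^2 + x^2 + y^2 := by
  classical
  have key : ∀ (f : Fin K → ℝ) (a : Fin K) (b : ℝ) (k : Fin K),
      (Function.update f a b k)^2 = Function.update (fun k => (f k)^2) a (b^2) k := by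
    intro f a b k
    by_cases hk : k = a
    · subst hk; simp
    · simp [Function.update_of_ne hk]
  have e1 : ∀ k, (Function.update (Function.update q i x) j y k)^2
      = Function.update (Function.update (fun k => (q k)^2) i (x^2)) j (y^2) k := by
    intro k
    rw [key]
    congr 1
    funext l
    rw [key]
  rw [Finset.sum_congr rfl (fun k _ => e1 k)]
  exact sum_update2 (fun k => (q k)^2) hij (x^2) (y^2)

/-- membership of the perturbed point -/
lemma move_mem {q : Fin K → ℝ} (hq : q ∈ Dom K S) {i j : Fin K} (hij : i ≠ j)
    {x : ℝ} (hx0 : 0 ≤ x) (hx1 : x ≤ 1) (hy0 : 0 ≤ q i + q j - x) (hy1 : q i + q j - x ≤ 1) :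
    Function.update (Function.update q i x) j (q i + q j - x) ∈ Dom K S := by
  obtain ⟨hbox, hsum⟩ := hq
  constructor
  · intro k
    by_cases hk : k = j
    · subst hk; simp only [Function.update_self]; exact ⟨hy0, hy1⟩
    · rw [Function.update_of_ne hk]
      by_cases hk' : k = i
      · subst hk'; simp only [Function.update_self]; exact ⟨hx0, hx1⟩
      · rw [Function.update_of_ne hk']; exact hbox k
  · rw [sum_update2 q hij]
    rw [hsum]; ring

/-- at the doubly-extremal point, interior coordinates are pairwise equal -/
lemma pairwise_eq {q q0 : Fin K → ℝ} (hqD : q ∈ Dom K S)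
    (hmin : IsMinOn (FF S) (Dom K S) q0)
    (hqval : FF S q = FF S q0)
    (hmax : IsMaxOn (fun r => ∑ k, (r k)^2) (Dom K S ∩ {r | FF S r = FF S q0}) q)
    {i j : Fin K} (hij : i ≠ j)
    (hi0 : 0 < q i) (hi1 : q i < 1) (hj0 : 0 < q j) (hj1 : q j < 1) :
    q i = q j := by
  classical
  set s : ℝ := q i + q j with hs
  have hs0 : 0 < s := by simp only [hs]; linarith
  have hs2 : s < 2 := by simp only [hs]; linarith
  set C : ℝ := FF S (Function.update (Function.update q i 0) j 0)
      + FF S (Function.update (Function.update q i 1) j 1)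
      - 2 * FF S (Function.update (Function.update q i 1) j 0) with hC
  -- value at the current point
  have hPq : Function.update (Function.update q i (q i)) j (q i + q j - q i) = q := by
    rw [show q i + q j - q i = q j by ring]
    rw [Function.update_eq_self, Function.update_eq_self]
  have hq_formula := FF_quad (S := S) q hij (q i)
  rw [hPq] at hq_formula
  by_cases hCsign : 0 ≤ C
  · -- push towards the boundary; contradiction with maximality of ∑ q²
    exfalso
    set x1 : ℝ := min 1 s with hx1def
    have hx10 : 0 ≤ x1 := le_min (by norm_num) hs0.le
    have hx11 : x1 ≤ 1 := min_le_left _ _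
    have hy10 : 0 ≤ q i + q j - x1 := by
      have := min_le_right (1:ℝ) s
      simp only [hs] at this ⊢
      linarith
    have hy11 : q i + q j - x1 ≤ 1 := by
      rcases le_total (1:ℝ) s with h | h
      · have : x1 = 1 := min_eq_left h
        rw [this]; simp only [hs] at hs2 ⊢; linarith
      · have : x1 = s := min_eq_right h
        rw [this]; simp only [hs]; linarith
    have hmem := move_mem hqD hij hx10 hx11 hy10 hy11
    have hform := FF_quad (S := S) q hij x1
    -- t decreases strictly
    have ht : x1 * (s - x1) < q i * q j := by
      rcases le_total (1:ℝ) s with h | h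
      · have hx1e : x1 = 1 := min_eq_left h
        rw [hx1e]
        simp only [hs]
        nlinarith
      · have hx1e : x1 = s := min_eq_right h
        rw [hx1e]
        simp only [hs]
        nlinarith
    -- value does not increase
    have hval : FF S (Function.update (Function.update q i x1) j (q i + q j - x1))
        ≤ FF S q := by
      rw [hform, hq_formula]
      have ht0 : (q i) * (q i + q j - q i) = q i * q j := by ring
      have hcc : x1 * (q i + q j - x1) ≤ (q i) * (q i + q j - q i) := by
        rw [ht0]
        simp only [hs] at ht
        linarith
      nlinarith [hcc, hCsign]
    -- so it is also a minimizer
    have hge : FF S q0 ≤ FF S (Function.update (Function.update q i x1) j (q i + q j - x1)) :=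
      hmin hmem
    have hmem' : Function.update (Function.update q i x1) j (q i + q j - x1)
        ∈ Dom K S ∩ {r | FF S r = FF S q0} := by
      refine ⟨hmem, ?_⟩
      simp only [Set.mem_setOf_eq]
      rw [hqval] at hval
      linarith
    have hGle := hmax hmem'
    simp only [Set.mem_setOf_eq] at hGle
    have hGval : ∑ k, (Function.update (Function.update q i x1) j (q i + q j - x1) k)^2
        = (∑ k, (q k)^2) - (q i)^2 - (q j)^2 + x1^2 + (q i + q j - x1)^2 :=
      sq_update2 q hij _ _
    have expand : x1^2 + (q i + q j - x1)^2 - (q i)^2 - (q j)^2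
        = 2 * (q i * q j - x1 * (s - x1)) := by
      simp only [hs]; ring
    have : (∑ k, (q k)^2) < ∑ k, (Function.update (Function.update q i x1) j (q i + q j - x1) k)^2 := by
      rw [hGval]
      nlinarith [ht, expand]
    linarith [hGle, this]
  · -- C < 0 : equalize
    push_neg at hCsign
    by_contra hne
    set x2 : ℝ := s/2 with hx2def
    have hx20 : 0 ≤ x2 := by simp only [hx2def]; linarith
    have hx21 : x2 ≤ 1 := by simp only [hx2def]; linarith
    have hy20 : 0 ≤ q i + q j - x2 := by simp only [hx2def, hs]; linarith [hs0]
    have hy21 : q i + q j - x2 ≤ 1 := by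
      simp only [hx2def, hs] at *
      linarith
    have hmem := move_mem hqD hij hx20 hx21 hy20 hy21
    have hform := FF_quad (S := S) q hij x2
    have ht : q i * q j < x2 * (s - x2) := by
      have : x2 * (s - x2) - q i * q j = ((q i - q j)/2)^2 := by
        simp only [hx2def, hs]; ring
      have hpos : (0:ℝ) < ((q i - q j)/2)^2 := by
        apply sq_pos_of_ne_zero
        intro hcc
        apply hne
        field_simp at hcc
        linarith
      nlinarith [hpos, this]
    have hval : FF S (Function.update (Function.update q i x2) j (q i + q j - x2))
        < FF S q := by
      rw [hform, hq_formula]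
      have ht0 : (q i) * (q i + q j - q i) = q i * q j := by ring
      have hcc : (q i) * (q i + q j - q i) < x2 * (q i + q j - x2) := by
        rw [ht0]
        simp only [hs] at ht
        linarith
      nlinarith [hcc, hCsign]
    have hge : FF S q0 ≤ FF S (Function.update (Function.update q i x2) j (q i + q j - x2)) :=
      hmin hmem
    rw [hqval] at hval
    linarith

/-- evaluation of FF at a structured point -/
lemma eval_structured (q : Fin K → ℝ) (hbox : ∀ i, 0 ≤ q i ∧ q i ≤ 1)
    {c : ℝ} (hc0 : 0 < c) (hc1 : c < 1)
    (htri : ∀ i, q i = 0 ∨ q i = 1 ∨ q i = c)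
    {a m n : ℕ}
    (ha : (Finset.univ.filter (fun i => q i = 1)).card = a)
    (hn : (Finset.univ.filter (fun i => q i = c)).card = n)
    (hS : S = a + m) :
    FF S q = ∑ k ∈ (Finset.range (n+1)).filter (fun k => m ≤ k),
      (n.choose k : ℝ) * c^k * (1-c)^(n-k) := by
  classical
  set O : Finset (Fin K) := Finset.univ.filter (fun i => q i = 1) with hO
  set Bf : Finset (Fin K) := Finset.univ.filter (fun i => q i = c) with hBf
  have hOB : Disjoint O Bf := by
    rw [Finset.disjoint_left]
    intro i hiO hiB
    rw [hO, Finset.mem_filter] at hiO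
    rw [hBf, Finset.mem_filter] at hiB
    rw [hiO.2] at hiB
    linarith [hiB.2]
  -- step A : restrict the sum
  set T : Finset (Finset (Fin K)) :=
    Finset.univ.filter (fun I => (S ≤ I.card ∧ O ⊆ I) ∧ I ⊆ O ∪ Bf) with hT
  have stepA : FF S q = ∑ I ∈ T, bernoulliP q I := by
    unfold FF
    rw [hT]
    symm
    apply Finset.sum_subset
    · intro I hI
      simp only [Finset.mem_filter, Finset.mem_univ, true_and] at hI ⊢
      exact hI.1.1
    · intro I hI hI2
      simp only [Finset.mem_filter, Finset.mem_univ, true_and] at hI hI2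
      push_neg at hI2
      by_cases hsub : O ⊆ I
      · -- then there is i ∈ I with q i = 0
        have hnot : ¬ I ⊆ O ∪ Bf := by
          intro hcc
          exact (hI2 ⟨hI, hsub⟩) hcc
        obtain ⟨i, hiI, hiNO⟩ := Finset.not_subset.mp hnot
        have hqi : q i = 0 := by
          rcases htri i with h | h | h
          · exact h
          · exfalso; apply hiNO; rw [Finset.mem_union, hO]; left
            simp [h]
          · exfalso; apply hiNO; rw [Finset.mem_union, hBf]; right
            simp [h]
        unfold bernoulliP
        rw [Finset.prod_eq_zero hiI hqi, zero_mul]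
      · obtain ⟨i, hiO, hiNI⟩ := Finset.not_subset.mp hsub
        have hiC : i ∈ Iᶜ := Finset.mem_compl.mpr hiNI
        have hqi : q i = 1 := by
          rw [hO, Finset.mem_filter] at hiO
          exact hiO.2
        unfold bernoulliP
        rw [Finset.prod_eq_zero hiC (by rw [hqi]; ring), mul_zero]
  -- step B : reindex over subsets of Bf
  have stepB : ∑ I ∈ T, bernoulliP q I
      = ∑ J ∈ Bf.powerset.filter (fun J => m ≤ J.card), c^(J.card) * (1-c)^(n - J.card) := by
    apply Finset.sum_nbij' (i := fun I => I \ O) (j := fun J => O ∪ J)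
    · -- maps to
      intro I hI
      rw [hT, Finset.mem_filter] at hI
      obtain ⟨-, ⟨hcard, hOsub⟩, hsub⟩ := hI
      simp only [Finset.mem_filter, Finset.mem_powerset]
      constructor
      · intro x hx
        rw [Finset.mem_sdiff] at hx
        rcases Finset.mem_union.mp (hsub hx.1) with h | h
        · exact absurd h hx.2
        · exact h
      · have h1 : (I \ O).card = I.card - O.card := Finset.card_sdiff_of_subset hOsub
        have h2 : O.card ≤ I.card := Finset.card_le_card hOsub
        rw [h1, ha]
        omega
    · -- inverse maps to
      intro J hJ
      simp only [Finset.mem_filter, Finset.mem_powerset] at hJ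
      rw [hT, Finset.mem_filter]
      have hdisj : Disjoint O J := hOB.mono_right hJ.1
      refine ⟨Finset.mem_univ _, ⟨?_, Finset.subset_union_left⟩, ?_⟩
      · rw [Finset.card_union_of_disjoint hdisj, ha, hS]
        omega
      · exact Finset.union_subset_union_right hJ.1
    · -- left inverse
      intro I hI
      rw [hT, Finset.mem_filter] at hI
      exact Finset.union_sdiff_of_subset hI.2.1.2
    · -- right inverse
      intro J hJ
      simp only [Finset.mem_filter, Finset.mem_powerset] at hJ
      exact Finset.union_sdiff_cancel_left (hOB.mono_right hJ.1)
    · -- values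
      intro I hI
      rw [hT, Finset.mem_filter] at hI
      obtain ⟨-, ⟨hcard, hOsub⟩, hsub⟩ := hI
      have hJB : I \ O ⊆ Bf := by
        intro x hx
        rw [Finset.mem_sdiff] at hx
        rcases Finset.mem_union.mp (hsub hx.1) with h | h
        · exact absurd h hx.2
        · exact h
      unfold bernoulliP
      have hsplit : I = O ∪ (I \ O) := (Finset.union_sdiff_of_subset hOsub).symm
      have hdisj : Disjoint O (I \ O) := Finset.disjoint_sdiff
      have hprod1 : ∏ i ∈ I, q i = c^((I \ O).card) := by
        conv_lhs => rw [hsplit]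
        rw [Finset.prod_union hdisj]
        have e1 : ∏ i ∈ O, q i = 1 := by
          apply Finset.prod_eq_one
          intro i hi
          rw [hO, Finset.mem_filter] at hi
          exact hi.2
        have e2 : ∏ i ∈ I \ O, q i = c^((I \ O).card) := by
          rw [Finset.prod_congr rfl (fun i hi => ?_), Finset.prod_const]
          have hmem := hJB hi
          rw [hBf, Finset.mem_filter] at hmem
          exact hmem.2
        rw [e1, e2, one_mul]
      have hcompl : Iᶜ = (Bf \ (I \ O)) ∪ (O ∪ Bf)ᶜ := by
        ext x
        simp only [Finset.mem_compl, Finset.mem_union, Finset.mem_sdiff]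
        constructor
        · intro hx
          by_cases hxB : x ∈ Bf
          · left
            exact ⟨hxB, fun hc => hx hc.1⟩
          · right
            intro hcc
            rcases hcc with h | h
            · exact hx (hOsub h)
            · exact hxB h
        · rintro (⟨hxB, hxNI⟩ | hx) hxI
          · exact hxNI ⟨hxI, fun hxO => (Finset.disjoint_left.mp hOB) hxO hxB⟩
          · exact hx (by have := hsub hxI; rwa [Finset.mem_union] at this)
      have hdisj2 : Disjoint (Bf \ (I \ O)) ((O ∪ Bf)ᶜ) := by
        rw [Finset.disjoint_left]
        intro x hx hx2
        rw [Finset.mem_sdiff] at hx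
        rw [Finset.mem_compl] at hx2
        exact hx2 (Finset.mem_union.mpr (Or.inr hx.1))
      have hprod2 : ∏ i ∈ Iᶜ, (1 - q i) = (1-c)^(n - (I \ O).card) := by
        rw [hcompl, Finset.prod_union hdisj2]
        have e3 : ∏ i ∈ (O ∪ Bf)ᶜ, (1 - q i) = 1 := by
          apply Finset.prod_eq_one
          intro i hi
          rw [Finset.mem_compl, Finset.mem_union] at hi
          push_neg at hi
          have hq0 : q i = 0 := by
            rcases htri i with h | h | h
            · exact h
            · exact absurd (by rw [hO, Finset.mem_filter]; exact ⟨Finset.mem_univ _, h⟩) hi.1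
            · exact absurd (by rw [hBf, Finset.mem_filter]; exact ⟨Finset.mem_univ _, h⟩) hi.2
          rw [hq0]; ring
        have e4 : ∏ i ∈ Bf \ (I \ O), (1 - q i) = (1-c)^(n - (I \ O).card) := by
          rw [Finset.prod_congr rfl (fun i hi => ?_), Finset.prod_const]
          · rw [Finset.card_sdiff_of_subset hJB, hn]
          · rw [Finset.mem_sdiff, hBf, Finset.mem_filter] at hi
            rw [hi.1.2]
        rw [e3, e4, mul_one]
      rw [hprod1, hprod2]
  -- step C : group by cardinality
  have stepC : ∑ J ∈ Bf.powerset.filter (fun J => m ≤ J.card), c^(J.card) * (1-c)^(n - J.card)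
      = ∑ k ∈ (Finset.range (n+1)).filter (fun k => m ≤ k),
          (n.choose k : ℝ) * c^k * (1-c)^(n-k) := by
    rw [Finset.sum_filter, Finset.sum_powerset]
    rw [Finset.sum_filter, hn]
    apply Finset.sum_congr rfl
    intro k _
    have hconst : ∀ J ∈ Finset.powersetCard k Bf,
        (if m ≤ J.card then c^(J.card) * (1-c)^(n - J.card) else 0)
          = (if m ≤ k then c^k * (1-c)^(n-k) else 0) := by
      intro J hJ
      rw [(Finset.mem_powersetCard.mp hJ).2]
    rw [Finset.sum_congr rfl hconst, Finset.sum_const, Finset.card_powersetCard, hn]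
    rcases le_or_gt m k with h | h
    · rw [if_pos h, if_pos h]
      push_cast
      ring
    · rw [if_neg (by omega), if_neg (by omega)]
      simp
  rw [stepA, stepB, stepC]

end JSpb

open JSpb in
theorem stmt3 {K S : ℕ} (hS : 0 < S) (p : Fin K → ℝ) (hp : ∀ i, 0 ≤ p i ∧ p i ≤ 1)
    (hsum : ∑ i, p i = S) :
    (1 : ℝ) / 2 ≤ ∑ I ∈ Finset.univ.filter (fun I : Finset (Fin K) => S ≤ I.card),
      bernoulliP p I := by
  classical
  have hpD : p ∈ Dom K S := ⟨hp, hsum⟩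
  obtain ⟨q0, hq0D, hq0min⟩ :=
    (isCompact_Dom (K := K) (S := S)).exists_isMinOn ⟨p, hpD⟩ (FF_cont (S := S)).continuousOn
  have hD'comp : IsCompact (Dom K S ∩ {r | FF S r = FF S q0}) :=
    isCompact_Dom.inter_right (isClosed_eq FF_cont continuous_const)
  have hGcont : Continuous (fun r : Fin K → ℝ => ∑ k, (r k)^2) :=
    continuous_finset_sum _ (fun i _ => (continuous_apply i).pow 2)
  obtain ⟨q, hqD', hqmax⟩ := hD'comp.exists_isMaxOn ⟨q0, hq0D, rfl⟩ hGcont.continuousOn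
  obtain ⟨hqD, hqval⟩ := hqD'
  rw [Set.mem_setOf_eq] at hqval
  suffices h : (1:ℝ)/2 ≤ FF S q by
    have h2 : FF S q ≤ FF S p := by rw [hqval]; exact hq0min hpD
    exact le_trans h h2
  have hbox := hqD.1
  have hqsum := hqD.2
  set IntF : Finset (Fin K) := Finset.univ.filter (fun i => 0 < q i ∧ q i < 1) with hIntF
  rcases eq_or_ne IntF ∅ with hIF | hIF
  · -- all coordinates are 0 or 1 : deterministic case
    have h01 : ∀ i, q i = 0 ∨ q i = 1 := by
      intro i
      have : i ∉ IntF := by rw [hIF]; exact Finset.notMem_empty i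
      rw [hIntF, Finset.mem_filter] at this
      push_neg at this
      rcases lt_or_ge 0 (q i) with h | h
      · right
        have := this (Finset.mem_univ i) h
        linarith [(hbox i).2]
      · left
        linarith [(hbox i).1]
    set O : Finset (Fin K) := Finset.univ.filter (fun i => q i = 1) with hO
    have hOsum : ∑ i, q i = (O.card : ℝ) := by
      rw [← Finset.sum_filter_add_sum_filter_not Finset.univ (fun i => q i = 1) q]
      have e1 : ∑ i ∈ Finset.univ.filter (fun i => q i = 1), q i = (O.card : ℝ) := by
        rw [Finset.sum_congr rfl (fun i hi => (Finset.mem_filter.mp hi).2), Finset.sum_const,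
          nsmul_eq_mul, mul_one, hO]
      have e2 : ∑ i ∈ Finset.univ.filter (fun i => ¬ q i = 1), q i = 0 := by
        apply Finset.sum_eq_zero
        intro i hi
        rcases h01 i with h | h
        · exact h
        · exact absurd h (Finset.mem_filter.mp hi).2
      rw [e1, e2, add_zero]
    have hcardO : O.card = S := by
      have : (O.card : ℝ) = (S : ℝ) := by rw [← hOsum, hqsum]
      exact_mod_cast this
    have hmemO : O ∈ Finset.univ.filter (fun I : Finset (Fin K) => S ≤ I.card) := by
      simp only [Finset.mem_filter, Finset.mem_univ, true_and]
      omega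
    have hbernO : bernoulliP q O = 1 := by
      unfold bernoulliP
      have e1 : ∏ i ∈ O, q i = 1 :=
        Finset.prod_eq_one (fun i hi => (Finset.mem_filter.mp hi).2)
      have e2 : ∏ i ∈ Oᶜ, (1 - q i) = 1 := by
        apply Finset.prod_eq_one
        intro i hi
        rw [Finset.mem_compl, hO, Finset.mem_filter] at hi
        push_neg at hi
        rcases h01 i with h | h
        · rw [h]; ring
        · exact absurd h (hi (Finset.mem_univ i))
      rw [e1, e2, mul_one]
    have : (1:ℝ) ≤ FF S q := by
      unfold FF
      rw [← hbernO]
      exact Finset.single_le_sum (fun I _ => bernoulliP_nonneg hbox I) hmemO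
    linarith
  · -- there is an interior coordinate
    obtain ⟨i₀, hi₀⟩ := Finset.nonempty_iff_ne_empty.mpr hIF
    rw [hIntF, Finset.mem_filter] at hi₀
    set c : ℝ := q i₀ with hc
    have hc0 : 0 < c := hi₀.2.1
    have hc1 : c < 1 := hi₀.2.2
    have hall : ∀ i, 0 < q i → q i < 1 → q i = c := by
      intro i h0 h1
      rcases eq_or_ne i i₀ with h | h
      · rw [h]
      · exact pairwise_eq hqD hq0min hqval hqmax h h0 h1 hc0 hc1
    have htri : ∀ i, q i = 0 ∨ q i = 1 ∨ q i = c := by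
      intro i
      rcases lt_or_ge 0 (q i) with h | h
      · rcases lt_or_ge (q i) 1 with h' | h'
        · right; right; exact hall i h h'
        · right; left; linarith [(hbox i).2]
      · left; linarith [(hbox i).1]
    set O : Finset (Fin K) := Finset.univ.filter (fun i => q i = 1) with hO
    set Bf : Finset (Fin K) := Finset.univ.filter (fun i => q i = c) with hBf
    set a : ℕ := O.card with haa
    set n : ℕ := Bf.card with hnn
    -- Bf is nonempty
    have hBfne : 0 < n := by
      rw [hnn]
      apply Finset.card_pos.mpr
      exact ⟨i₀, by rw [hBf, Finset.mem_filter]; exact ⟨Finset.mem_univ _, rfl⟩⟩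
    -- the sum identity : a + n * c = S
    have hsum2 : (a:ℝ) + (n:ℝ) * c = (S:ℝ) := by
      rw [← hqsum]
      rw [← Finset.sum_filter_add_sum_filter_not Finset.univ (fun i => q i = 1) q]
      have e1 : ∑ i ∈ Finset.univ.filter (fun i => q i = 1), q i = (a : ℝ) := by
        rw [Finset.sum_congr rfl (fun i hi => (Finset.mem_filter.mp hi).2), Finset.sum_const,
          nsmul_eq_mul, mul_one, haa, hO]
      have hsplit := Finset.sum_filter_add_sum_filter_not
        (Finset.univ.filter (fun i => ¬ q i = 1)) (fun i => q i = c) q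
      have e2a : (Finset.univ.filter (fun i => ¬ q i = 1)).filter (fun i => q i = c) = Bf := by
        rw [hBf]
        ext i
        simp only [Finset.filter_filter, Finset.mem_filter, Finset.mem_univ, true_and]
        constructor
        · rintro ⟨-, h⟩; exact h
        · intro h; exact ⟨by rw [h]; exact ne_of_lt hc1, h⟩
      have e2b : ∑ i ∈ Bf, q i = (n:ℝ) * c := by
        rw [Finset.sum_congr rfl (fun i hi => (Finset.mem_filter.mp hi).2), Finset.sum_const,
          nsmul_eq_mul, hnn, hBf]
      have e2c : ∑ i ∈ (Finset.univ.filter (fun i => ¬ q i = 1)).filter (fun i => ¬ q i = c), q i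
          = 0 := by
        apply Finset.sum_eq_zero
        intro i hi
        simp only [Finset.filter_filter, Finset.mem_filter, Finset.mem_univ, true_and] at hi
        rcases htri i with h | h | h
        · exact h
        · exact absurd h hi.1
        · exact absurd h hi.2
      rw [e2a, e2b, e2c] at hsplit
      rw [e1, ← hsplit]
      ring
    -- define m
    have haS : a < S := by
      have hnr : (0:ℝ) < (n:ℝ) := by exact_mod_cast hBfne
      have : (a:ℝ) < (S:ℝ) := by nlinarith [hsum2, hc0, hnr]
      exact_mod_cast this
    set m : ℕ := S - a with hm
    have hSm : S = a + m := by omega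
    have hmc : (m:ℝ) = (n:ℝ) * c := by
      have : (m:ℝ) = (S:ℝ) - a := by
        rw [hm]; push_cast [Nat.cast_sub haS.le]; ring
      rw [this]; linarith [hsum2]
    have hm1 : 1 ≤ m := by omega
    have hmn : m < n := by
      have hnr : (0:ℝ) < (n:ℝ) := by exact_mod_cast hBfne
      have : (m:ℝ) < (n:ℝ) := by
        rw [hmc]
        nlinarith [hnr]
      exact_mod_cast this
    have hceq : c = (m:ℝ)/n := by
      have hn0 : (n:ℝ) ≠ 0 := by
        have : (0:ℝ) < n := by exact_mod_cast hBfne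
        linarith
      field_simp
      linarith [hmc]
    have heval := eval_structured (S := S) q hbox hc0 hc1 htri
      (haa.symm) (hnn.symm) hSm
    rw [heval]
    have : ∑ k ∈ (Finset.range (n+1)).filter (fun k => m ≤ k),
        (n.choose k : ℝ) * c^k * (1-c)^(n-k)
      = ∑ k ∈ (Finset.range (n+1)).filter (fun k => m ≤ k),
        (n.choose k : ℝ) * ((m:ℝ)/n)^k * (1-(m:ℝ)/n)^(n-k) := by
      rw [hceq]
    rw [this]
    have hmed := JSbin.median (n := n) (m := m) hm1 hmn
    simp only [JSbin.bb] at hmed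
    exact hmed
end

section
/- Let Φ be a dictionary with unit-norm columns, y = Φ_I x_I with x_{i_k} = c_k σ_k for strictly positive c_k and signs σ_k ∈ {±1}. If ‖(Φ_I*Φ_I − I)x_I‖_∞ < ‖c‖_min/2 and ‖Φ_{I^c}*Φ_I x_I‖_∞ < ‖c‖_min/2, then min_{i∈I}|⟨φ_i, y⟩| > max_{j∉I}|⟨φ_j, y⟩|, i.e., thresholding with sparsity |I| recovers the support I. -/
/-! Correlating column `k` with `y = ∑_{j ∈ I} x_j φ_j` gives `(Φᵀ Φ x_I)_k`. Off the support this
is below `min c / 2` by hypothesis. On the support it is `x_i` plus the `i`-th entry of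
`(Φᵀ Φ - 1) x_I`, and `|x_i| = c_i ≥ min c`, so the reverse triangle inequality puts it above
`min c / 2`. -/

open Matrix
open scoped BigOperators

namespace Matrix

variable {m n R : Type*} [Fintype m]

theorem sum_mul_sum_eq_sum_transpose_mul_self [CommSemiring R] (Φ : Matrix m n R)
    (I : Finset n) (x : n → R) (k : n) :
    ∑ r, Φ r k * ∑ j ∈ I, Φ r j * x j = ∑ j ∈ I, (Φᵀ * Φ) k j * x j := by
  simp only [mul_apply, transpose_apply, Finset.mul_sum, Finset.sum_mul]
  rw [Finset.sum_comm]
  exact Finset.sum_congr rfl fun _ _ => Finset.sum_congr rfl fun _ _ => by ring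

theorem sum_apply_mul_eq_sum_sub_one_apply_mul_add [DecidableEq n] [Ring R] (G : Matrix n n R) {I : Finset n}
    (x : n → R) {i : n} (hi : i ∈ I) :
    ∑ j ∈ I, G i j * x j = ∑ j ∈ I, (G - 1) i j * x j + x i := by
  simp [sub_mul, Finset.sum_sub_distrib, one_apply, hi]

end Matrix

theorem stmt12_general {d K : ℕ} (Φ : Matrix (Fin d) (Fin K) ℝ)
    (I : Finset (Fin K)) (hI : I.Nonempty) (c σ : Fin K → ℝ)
    (hc : ∀ i ∈ I, 0 < c i) (hσ : ∀ i ∈ I, σ i = 1 ∨ σ i = -1)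
    (h1 : ∀ i ∈ I,
      |∑ j ∈ I, (Φᵀ * Φ - 1 : Matrix (Fin K) (Fin K) ℝ) i j * (c j * σ j)| < I.inf' hI c / 2)
    (h2 : ∀ k, k ∉ I →
      |∑ j ∈ I, (Φᵀ * Φ : Matrix (Fin K) (Fin K) ℝ) k j * (c j * σ j)| < I.inf' hI c / 2) :
    ∀ i ∈ I, ∀ k, k ∉ I →
      |∑ row, Φ row k * ∑ j ∈ I, Φ row j * (c j * σ j)| <
        |∑ row, Φ row i * ∑ j ∈ I, Φ row j * (c j * σ j)| := by
  intro i hi k hk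
  rw [sum_mul_sum_eq_sum_transpose_mul_self, sum_mul_sum_eq_sum_transpose_mul_self,
    sum_apply_mul_eq_sum_sub_one_apply_mul_add _ _ hi]
  have hxi : |c i * σ i| = c i := by
    rcases hσ i hi with h | h <;> simp [h, abs_of_pos (hc i hi)]
  have hmin : I.inf' hI c ≤ c i := Finset.inf'_le c hi
  have hreverse := abs_sub_abs_le_abs_sub (c i * σ i)
    (-∑ j ∈ I, (Φᵀ * Φ - 1 : Matrix (Fin K) (Fin K) ℝ) i j * (c j * σ j))
  rw [abs_neg, sub_neg_eq_add, add_comm, hxi] at hreverse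
  linarith [h1 i hi, h2 k hk]

theorem stmt12 {d K : ℕ} (Φ : Matrix (Fin d) (Fin K) ℝ)
    (hunit : ∀ k, ∑ i, Φ i k ^ 2 = 1)
    (I : Finset (Fin K)) (hI : I.Nonempty) (c σ : Fin K → ℝ)
    (hc : ∀ i ∈ I, 0 < c i) (hσ : ∀ i ∈ I, σ i = 1 ∨ σ i = -1)
    (h1 : ∀ i ∈ I,
      |∑ j ∈ I, (Φᵀ * Φ - 1 : Matrix (Fin K) (Fin K) ℝ) i j * (c j * σ j)| < I.inf' hI c / 2)
    (h2 : ∀ k, k ∉ I →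
      |∑ j ∈ I, (Φᵀ * Φ : Matrix (Fin K) (Fin K) ℝ) k j * (c j * σ j)| < I.inf' hI c / 2) :
    ∀ i ∈ I, ∀ k, k ∉ I →
      |∑ row, Φ row k * ∑ j ∈ I, Φ row j * (c j * σ j)| <
        |∑ row, Φ row i * ∑ j ∈ I, Φ row j * (c j * σ j)| :=
  stmt12_general Φ I hI c σ hc hσ h1 h2
end

section
/- Let Φ be a dictionary with unit-norm columns, I a support, J ⊊ I, L = I∖J, and y = Φ_I x_I. Set H = Φ*Φ − I and ϑ = ‖Φ_I*Φ_I − I‖_{2,2}, and assume ϑ < 1/2 and ‖H_I‖_{∞,2}·(2 + 2ϑ/(1−ϑ)) < ‖x_L‖_∞/‖x_L‖₂. Then with residual r_J = y − P(Φ_J)y (the orthogonal projection residual), we have max_{k∉I} |⟨φ_k, r_J⟩| < max_{k∈L} |⟨φ_k, r_J⟩|, i.e., OMP selects an atom from the support in the next step. -/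
open Matrix
open scoped BigOperators

noncomputable def opNorm {m n : Type*} [Fintype m] [Fintype n] [DecidableEq n]
    (M : Matrix m n ℝ) : ℝ :=
  ‖LinearMap.toContinuousLinearMap (Matrix.toEuclideanLin M)‖

lemma opNorm_nonneg {m n : Type*} [Fintype m] [Fintype n] [DecidableEq n]
    (M : Matrix m n ℝ) : 0 ≤ opNorm M := norm_nonneg _

lemma sqrt_sum_mulVec_le {m n : Type*} [Fintype m] [Fintype n] [DecidableEq n]
    (M : Matrix m n ℝ) (v : n → ℝ) :
    Real.sqrt (∑ i, (M.mulVec v i) ^ 2) ≤ opNorm M * Real.sqrt (∑ j, v j ^ 2) := by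
  have h := (LinearMap.toContinuousLinearMap (Matrix.toEuclideanLin M)).le_opNorm
    ((WithLp.equiv 2 (n → ℝ)).symm v)
  have h1 : ‖LinearMap.toContinuousLinearMap (Matrix.toEuclideanLin M)
      ((WithLp.equiv 2 (n → ℝ)).symm v)‖
      = Real.sqrt (∑ i, (M.mulVec v i) ^ 2) := by
    rw [show (LinearMap.toContinuousLinearMap (Matrix.toEuclideanLin M)
        ((WithLp.equiv 2 (n → ℝ)).symm v) : EuclideanSpace ℝ m)
        = (WithLp.equiv 2 (m → ℝ)).symm (M.mulVec v) from rfl]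
    rw [EuclideanSpace.norm_eq]
    congr 1; apply Finset.sum_congr rfl; intro i _
    rw [WithLp.equiv_symm_apply, PiLp.toLp_apply, Real.norm_eq_abs, sq_abs]
  have h2 : ‖((WithLp.equiv 2 (n → ℝ)).symm v : EuclideanSpace ℝ n)‖
      = Real.sqrt (∑ j, v j ^ 2) := by
    rw [EuclideanSpace.norm_eq]
    congr 1; apply Finset.sum_congr rfl; intro i _
    rw [WithLp.equiv_symm_apply, PiLp.toLp_apply, Real.norm_eq_abs, sq_abs]
  rw [h1, h2] at h
  exact h

lemma sum_mulVec_sq_le {m n : Type*} [Fintype m] [Fintype n] [DecidableEq n]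
    (M : Matrix m n ℝ) (v : n → ℝ) :
    ∑ i, (M.mulVec v i) ^ 2 ≤ opNorm M ^ 2 * ∑ j, v j ^ 2 := by
  have h := sqrt_sum_mulVec_le M v
  have h1 : (0:ℝ) ≤ ∑ i, (M.mulVec v i) ^ 2 := Finset.sum_nonneg fun _ _ => sq_nonneg _
  have h2 : (0:ℝ) ≤ ∑ j, v j ^ 2 := Finset.sum_nonneg fun _ _ => sq_nonneg _
  calc ∑ i, (M.mulVec v i) ^ 2 = Real.sqrt (∑ i, (M.mulVec v i) ^ 2) ^ 2 := by
        rw [Real.sq_sqrt h1]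
    _ ≤ (opNorm M * Real.sqrt (∑ j, v j ^ 2)) ^ 2 := by
        apply pow_le_pow_left₀ (Real.sqrt_nonneg _) h
    _ = opNorm M ^ 2 * ∑ j, v j ^ 2 := by
        rw [mul_pow, Real.sq_sqrt h2]

lemma opNorm_submatrix_le {m n m' n' : Type*} [Fintype m] [Fintype n] [Fintype m'] [Fintype n']
    [DecidableEq n] [DecidableEq n']
    (M : Matrix m n ℝ) (e : m' → m) (f : n' → n)
    (he : Function.Injective e) (hf : Function.Injective f) :
    opNorm (M.submatrix e f) ≤ opNorm M := by
  classical
  apply ContinuousLinearMap.opNorm_le_bound _ (opNorm_nonneg M)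
  intro v
  set v0 : n' → ℝ := WithLp.equiv 2 (n' → ℝ) v with hv0
  set w : n → ℝ := Function.extend f v0 0 with hw
  have hwf : ∀ i, w (f i) = v0 i := fun i => hf.extend_apply _ _ _
  have hw0 : ∀ j, j ∉ Finset.univ.image f → w j = 0 := by
    intro j hj
    have : ¬∃ i, f i = j := by
      rintro ⟨i, rfl⟩; exact hj (Finset.mem_image_of_mem f (Finset.mem_univ i))
    rw [hw, Function.extend_apply' _ _ _ this]; rfl
  have hsumw : ∑ j, w j ^ 2 = ∑ i, v0 i ^ 2 := by
    rw [← Finset.sum_subset (Finset.subset_univ (Finset.univ.image f))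
      (fun j _ hj => by rw [hw0 j hj]; ring),
      Finset.sum_image (fun a _ b _ hab => hf hab)]
    exact Finset.sum_congr rfl fun i _ => by rw [hwf]
  have hmv : ∀ i', (M.submatrix e f).mulVec v0 i' = M.mulVec w (e i') := by
    intro i'
    unfold Matrix.mulVec dotProduct
    rw [← Finset.sum_subset (Finset.subset_univ (Finset.univ.image f))
      (fun j _ hj => by rw [hw0 j hj]; ring),
      Finset.sum_image (fun a _ b _ hab => hf hab)]
    exact Finset.sum_congr rfl fun i _ => by rw [hwf]; rfl
  have hsum3 : ∑ i', ((M.submatrix e f).mulVec v0 i') ^ 2 ≤ ∑ j, (M.mulVec w j) ^ 2 := by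
    calc ∑ i', ((M.submatrix e f).mulVec v0 i') ^ 2
        = ∑ i', (M.mulVec w (e i')) ^ 2 := Finset.sum_congr rfl fun i' _ => by rw [hmv]
      _ = ∑ j ∈ Finset.univ.image e, (M.mulVec w j) ^ 2 := by
          rw [Finset.sum_image (fun a _ b _ hab => he hab)]
      _ ≤ ∑ j, (M.mulVec w j) ^ 2 :=
          Finset.sum_le_sum_of_subset_of_nonneg (Finset.subset_univ _)
            (fun _ _ _ => sq_nonneg _)
  have hnorm : ‖LinearMap.toContinuousLinearMap (Matrix.toEuclideanLin (M.submatrix e f)) v‖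
      = Real.sqrt (∑ i', ((M.submatrix e f).mulVec v0 i') ^ 2) := by
    rw [show (LinearMap.toContinuousLinearMap (Matrix.toEuclideanLin (M.submatrix e f)) v
        : EuclideanSpace ℝ m')
        = (WithLp.equiv 2 (m' → ℝ)).symm ((M.submatrix e f).mulVec v0) from rfl]
    rw [EuclideanSpace.norm_eq]
    congr 1; apply Finset.sum_congr rfl; intro i _
    rw [WithLp.equiv_symm_apply, PiLp.toLp_apply, Real.norm_eq_abs, sq_abs]
  have hnv : ‖v‖ = Real.sqrt (∑ i, v0 i ^ 2) := by
    rw [EuclideanSpace.norm_eq]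
    congr 1; apply Finset.sum_congr rfl; intro i _
    rw [Real.norm_eq_abs, sq_abs]; rfl
  rw [hnorm, hnv]
  calc Real.sqrt (∑ i', ((M.submatrix e f).mulVec v0 i') ^ 2)
      ≤ Real.sqrt (∑ j, (M.mulVec w j) ^ 2) := Real.sqrt_le_sqrt hsum3
    _ ≤ opNorm M * Real.sqrt (∑ j, w j ^ 2) := sqrt_sum_mulVec_le M w
    _ = opNorm M * Real.sqrt (∑ i, v0 i ^ 2) := by rw [hsumw]

lemma abs_sum_mul_le {ι : Type*} (s : Finset ι) (f g : ι → ℝ) :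
    |∑ i ∈ s, f i * g i| ≤ Real.sqrt (∑ i ∈ s, f i ^ 2) * Real.sqrt (∑ i ∈ s, g i ^ 2) := by
  have hpos := Real.sum_mul_le_sqrt_mul_sqrt s f g
  have hneg := Real.sum_mul_le_sqrt_mul_sqrt s (fun i => -f i) g
  simp only [neg_mul, Finset.sum_neg_distrib, neg_sq] at hneg
  exact abs_le.mpr ⟨by linarith, hpos⟩

lemma sqrt_sum_sq_add_le {ι : Type*} (s : Finset ι) (f g : ι → ℝ) :
    Real.sqrt (∑ i ∈ s, (f i + g i) ^ 2) ≤
      Real.sqrt (∑ i ∈ s, f i ^ 2) + Real.sqrt (∑ i ∈ s, g i ^ 2) := by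
  have hf : (0:ℝ) ≤ ∑ i ∈ s, f i ^ 2 := Finset.sum_nonneg fun _ _ => sq_nonneg _
  have hg : (0:ℝ) ≤ ∑ i ∈ s, g i ^ 2 := Finset.sum_nonneg fun _ _ => sq_nonneg _
  have hfg := Real.sum_mul_le_sqrt_mul_sqrt s f g
  have h1 : ∑ i ∈ s, (f i + g i) ^ 2
      ≤ (Real.sqrt (∑ i ∈ s, f i ^ 2) + Real.sqrt (∑ i ∈ s, g i ^ 2)) ^ 2 := by
    have : ∑ i ∈ s, (f i + g i) ^ 2
        = ∑ i ∈ s, f i ^ 2 + 2 * (∑ i ∈ s, f i * g i) + ∑ i ∈ s, g i ^ 2 := by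
      rw [Finset.mul_sum, ← Finset.sum_add_distrib, ← Finset.sum_add_distrib]
      exact Finset.sum_congr rfl fun i _ => by ring
    rw [this, add_sq, Real.sq_sqrt hf, Real.sq_sqrt hg]
    nlinarith [Real.sqrt_nonneg (∑ i ∈ s, f i ^ 2), Real.sqrt_nonneg (∑ i ∈ s, g i ^ 2)]
  calc Real.sqrt (∑ i ∈ s, (f i + g i) ^ 2)
      ≤ Real.sqrt ((Real.sqrt (∑ i ∈ s, f i ^ 2) + Real.sqrt (∑ i ∈ s, g i ^ 2)) ^ 2) :=
        Real.sqrt_le_sqrt h1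
    _ = _ := Real.sqrt_sq (by positivity)

lemma isUnit_det_of_mulVec_inj {n : Type*} [Fintype n] [DecidableEq n]
    (G : Matrix n n ℝ) (h : Function.Injective G.mulVec) : IsUnit G.det := by
  have hinj : Function.Injective (Matrix.toLin' G) := by
    intro a b hab
    apply h
    simpa [Matrix.toLin'_apply] using hab
  have hbij : Function.Bijective (Matrix.toLin' G) :=
    ⟨hinj, (LinearMap.injective_iff_surjective).mp hinj⟩
  have := LinearEquiv.isUnit_det' (LinearEquiv.ofBijective _ hbij)
  rwa [show ((LinearEquiv.ofBijective _ hbij : (n → ℝ) ≃ₗ[ℝ] (n → ℝ)) : (n → ℝ) →ₗ[ℝ] (n → ℝ))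
    = Matrix.toLin' G from rfl, LinearMap.det_toLin'] at this

theorem stmt13 {d K : ℕ} (Φ : Matrix (Fin d) (Fin K) ℝ)
    (hunit : ∀ k, ∑ i, Φ i k ^ 2 = 1)
    (I J : Finset (Fin K)) (hJI : J ⊂ I) (hL : (I \ J).Nonempty)
    (x : Fin K → ℝ)
    (ϑ : ℝ)
    (hϑdef : ϑ = opNorm ((Φᵀ * Φ - 1).submatrix (Subtype.val : ↥I → Fin K)
      (Subtype.val : ↥I → Fin K)))
    (hϑ : ϑ < 1 / 2)
    (hmain :
      (⨆ i, Real.sqrt (∑ j ∈ I, ((Φᵀ * Φ - 1 : Matrix (Fin K) (Fin K) ℝ) i j) ^ 2)) *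
          (2 + 2 * ϑ / (1 - ϑ)) <
        ((I \ J).sup' hL fun k => |x k|) / Real.sqrt (∑ k ∈ I \ J, x k ^ 2))
    (y : Fin d → ℝ) (hy : y = fun row => ∑ j ∈ I, Φ row j * x j)
    (rJ : Fin d → ℝ)
    (hrJ : rJ = fun row =>
      y row -
        ((Φ.submatrix id (Subtype.val : ↥J → Fin K)).mulVec
          ((((Φ.submatrix id (Subtype.val : ↥J → Fin K))ᵀ *
              Φ.submatrix id (Subtype.val : ↥J → Fin K))⁻¹).mulVec
            ((Φ.submatrix id (Subtype.val : ↥J → Fin K))ᵀ.mulVec y))) row) :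
    ∃ k ∈ I \ J, ∀ m, m ∉ I →
      |∑ row, Φ row m * rJ row| < |∑ row, Φ row k * rJ row| := by
  classical
  set H : Matrix (Fin K) (Fin K) ℝ := Φᵀ * Φ - 1 with hHdef
  have hJsub : J ⊆ I := hJI.subset
  -- basic dot product identity
  have hdot' : ∀ a b : Fin K,
      (∑ row, Φ row a * Φ row b) = H a b + (if a = b then 1 else 0) := by
    intro a b
    simp only [hHdef, Matrix.sub_apply, Matrix.mul_apply, Matrix.transpose_apply,
      Matrix.one_apply]
    ring
  -- matrices
  set A := Φ.submatrix id (Subtype.val : ↥J → Fin K) with hA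
  set G := Aᵀ * A with hG
  set NJ : Matrix ↥J ↥J ℝ := H.submatrix Subtype.val Subtype.val with hNJ
  have hG1 : G = 1 + NJ := by
    ext j j'
    have h2 : G j j' = ∑ row, Φ row j.val * Φ row j'.val := by
      simp [hG, hA, Matrix.mul_apply]
    have h3 : (1 + NJ : Matrix ↥J ↥J ℝ) j j'
        = (if j.val = j'.val then 1 else 0) + H j.val j'.val := by
      simp [Matrix.add_apply, Matrix.one_apply, hNJ]
    rw [h2, h3, hdot']; ring
  have hinclJ : Function.Injective (fun j : ↥J => (⟨j.val, hJsub j.2⟩ : ↥I)) := by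
    intro a b hab
    have hv := congrArg Subtype.val hab; exact Subtype.ext hv
  have hNJle : opNorm NJ ≤ ϑ := by
    have hrepr : NJ = (H.submatrix (Subtype.val : ↥I → Fin K) Subtype.val).submatrix
        (fun j : ↥J => (⟨j.val, hJsub j.2⟩ : ↥I)) (fun j : ↥J => ⟨j.val, hJsub j.2⟩) := by
      ext j j'; simp [hNJ]
    rw [hϑdef, hrepr]
    exact opNorm_submatrix_le _ _ _ hinclJ hinclJ
  have hϑ0 : 0 ≤ ϑ := hϑdef ▸ opNorm_nonneg _
  have h1ϑ : 0 < 1 - ϑ := by linarith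
  -- G is invertible
  have hdet : IsUnit G.det := by
    apply isUnit_det_of_mulVec_inj
    have hker : ∀ cvec : ↥J → ℝ, G.mulVec cvec = 0 → cvec = 0 := by
      intro cv hcv
      rw [hG1, Matrix.add_mulVec, Matrix.one_mulVec] at hcv
      have hNc : NJ.mulVec cv = -cv := eq_neg_of_add_eq_zero_right hcv
      have hsq : ∑ j, cv j ^ 2 ≤ ϑ ^ 2 * ∑ j, cv j ^ 2 := by
        have h1 := sum_mulVec_sq_le NJ cv
        rw [hNc] at h1
        simp only [Pi.neg_apply, neg_sq] at h1
        calc ∑ j, cv j ^ 2 ≤ opNorm NJ ^ 2 * ∑ j, cv j ^ 2 := h1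
          _ ≤ ϑ ^ 2 * ∑ j, cv j ^ 2 := by
              apply mul_le_mul_of_nonneg_right _ (Finset.sum_nonneg fun _ _ => sq_nonneg _)
              exact pow_le_pow_left₀ (opNorm_nonneg _) hNJle 2
      have hnn : (0:ℝ) ≤ ∑ j, cv j ^ 2 := Finset.sum_nonneg fun _ _ => sq_nonneg _
      have hzero : ∑ j, cv j ^ 2 = 0 := by
        have hq : ϑ ^ 2 < 1 / 4 := by nlinarith
        have h4 := mul_le_mul_of_nonneg_right (le_of_lt hq) hnn
        linarith
      funext j
      have := (Finset.sum_eq_zero_iff_of_nonneg (fun i _ => sq_nonneg (cv i))).mp hzero j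
        (Finset.mem_univ j)
      exact pow_eq_zero_iff (by norm_num) |>.mp this
    intro a b hab
    have h0 : G.mulVec (a - b) = 0 := by
      rw [Matrix.mulVec_sub, hab, sub_self]
    exact sub_eq_zero.mp (hker _ h0)
  have hGiG : G⁻¹ * G = 1 := Matrix.nonsing_inv_mul G hdet
  have hGGi : G * G⁻¹ = 1 := Matrix.mul_nonsing_inv G hdet
  -- vectors
  set xJ : ↥J → ℝ := fun j => x j.val with hxJ
  set bv : ↥J → ℝ := fun j => ∑ l ∈ I \ J, H j.val l * x l with hbv
  set cv : ↥J → ℝ := G⁻¹.mulVec bv with hcv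
  have hAty : Aᵀ.mulVec y = G.mulVec xJ + bv := by
    funext j
    have hLHS : Aᵀ.mulVec y j = ∑ i ∈ I, (∑ row, Φ row j.val * Φ row i) * x i := by
      calc Aᵀ.mulVec y j = ∑ row, Φ row j.val * ∑ i ∈ I, Φ row i * x i := by
            simp [Matrix.mulVec, dotProduct, hA, hy]
        _ = ∑ row, ∑ i ∈ I, Φ row j.val * (Φ row i * x i) := by
            simp [Finset.mul_sum]
        _ = ∑ i ∈ I, ∑ row, Φ row j.val * (Φ row i * x i) := Finset.sum_comm
        _ = ∑ i ∈ I, (∑ row, Φ row j.val * Φ row i) * x i := by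
            refine Finset.sum_congr rfl fun i _ => ?_
            rw [Finset.sum_mul]
            exact Finset.sum_congr rfl fun row _ => by ring
    rw [hLHS, ← Finset.sum_sdiff hJsub]
    have e1 : ∑ i ∈ I \ J, (∑ row, Φ row j.val * Φ row i) * x i = bv j := by
      refine Finset.sum_congr rfl fun l hl => ?_
      have hne : j.val ≠ l := fun hh => (Finset.mem_sdiff.mp hl).2 (hh ▸ j.2)
      rw [hdot' j.val l, if_neg hne, add_zero]
    have e2 : ∑ i ∈ J, (∑ row, Φ row j.val * Φ row i) * x i = G.mulVec xJ j := by
      have : G.mulVec xJ j = ∑ j' : ↥J, (∑ row, Φ row j.val * Φ row j'.val) * x j'.val := by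
        simp only [Matrix.mulVec, dotProduct]
        refine Finset.sum_congr rfl fun j' _ => ?_
        simp [hG, hA, Matrix.mul_apply, hxJ]
      rw [this, Finset.univ_eq_attach,
        Finset.sum_attach J (fun k => (∑ row, Φ row j.val * Φ row k) * x k)]
    rw [e1, e2, Pi.add_apply]; ring
  have hproj : G⁻¹.mulVec (Aᵀ.mulVec y) = xJ + cv := by
    rw [hAty, Matrix.mulVec_add, Matrix.mulVec_mulVec, hGiG, Matrix.one_mulVec, hcv]
  have hr : ∀ row, rJ row
      = (∑ l ∈ I \ J, Φ row l * x l) - ∑ j : ↥J, Φ row j.val * cv j := by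
    intro row
    rw [hrJ]
    simp only []
    rw [hproj]
    have hAm : A.mulVec (xJ + cv) row
        = (∑ j : ↥J, Φ row j.val * x j.val) + ∑ j : ↥J, Φ row j.val * cv j := by
      simp [Matrix.mulVec, dotProduct, hA, mul_add, Finset.sum_add_distrib, hxJ]
    have hyrow : y row = ∑ i ∈ I, Φ row i * x i := by rw [hy]
    rw [hAm, hyrow]
    have hsplit : ∑ i ∈ I, Φ row i * x i
        = (∑ l ∈ I \ J, Φ row l * x l) + ∑ k ∈ J, Φ row k * x k :=
      (Finset.sum_sdiff hJsub).symm
    have hattach : ∑ j : ↥J, Φ row j.val * x j.val = ∑ k ∈ J, Φ row k * x k := by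
      rw [Finset.univ_eq_attach]
      exact Finset.sum_attach J (fun k => Φ row k * x k)
    rw [hsplit, hattach]; ring
  -- dot products with residual
  have hdotr : ∀ m : Fin K, (∑ row, Φ row m * rJ row)
      = (∑ l ∈ I \ J, (H m l + if m = l then 1 else 0) * x l)
        - ∑ j : ↥J, (H m j.val + if m = j.val then 1 else 0) * cv j := by
    intro m
    have e0 : ∑ row, Φ row m * rJ row
        = (∑ row, Φ row m * ∑ l ∈ I \ J, Φ row l * x l)
          - ∑ row, Φ row m * ∑ j : ↥J, Φ row j.val * cv j := by
      rw [← Finset.sum_sub_distrib]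
      refine Finset.sum_congr rfl fun row _ => ?_
      rw [hr row]; ring
    have e1 : ∑ row, Φ row m * ∑ l ∈ I \ J, Φ row l * x l
        = ∑ l ∈ I \ J, (∑ row, Φ row m * Φ row l) * x l := by
      calc ∑ row, Φ row m * ∑ l ∈ I \ J, Φ row l * x l
          = ∑ row, ∑ l ∈ I \ J, Φ row m * (Φ row l * x l) := by simp [Finset.mul_sum]
        _ = ∑ l ∈ I \ J, ∑ row, Φ row m * (Φ row l * x l) := Finset.sum_comm
        _ = _ := by
            refine Finset.sum_congr rfl fun l _ => ?_
            rw [Finset.sum_mul]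
            exact Finset.sum_congr rfl fun row _ => by ring
    have e2 : ∑ row, Φ row m * ∑ j : ↥J, Φ row j.val * cv j
        = ∑ j : ↥J, (∑ row, Φ row m * Φ row j.val) * cv j := by
      calc ∑ row, Φ row m * ∑ j : ↥J, Φ row j.val * cv j
          = ∑ row, ∑ j : ↥J, Φ row m * (Φ row j.val * cv j) := by simp [Finset.mul_sum]
        _ = ∑ j : ↥J, ∑ row, Φ row m * (Φ row j.val * cv j) := Finset.sum_comm
        _ = _ := by
            refine Finset.sum_congr rfl fun j _ => ?_
            rw [Finset.sum_mul]
            exact Finset.sum_congr rfl fun row _ => by ring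
    rw [e0, e1, e2]
    congr 1
    · exact Finset.sum_congr rfl fun l _ => by rw [hdot']
    · exact Finset.sum_congr rfl fun j _ => by rw [hdot']
  -- sup bound
  have hrowle : ∀ i, Real.sqrt (∑ j ∈ I, H i j ^ 2) ≤ ⨆ i, Real.sqrt (∑ j ∈ I, H i j ^ 2) :=
    fun i => le_ciSup (f := fun i => Real.sqrt (∑ j ∈ I, H i j ^ 2))
      (Set.Finite.bddAbove (Set.finite_range _)) i
  set hs := ⨆ i, Real.sqrt (∑ j ∈ I, H i j ^ 2) with hhs
  obtain ⟨k₀, hk₀L, hk₀⟩ := Finset.exists_mem_eq_sup' hL fun k => |x k|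
  have hhs0 : 0 ≤ hs := le_trans (Real.sqrt_nonneg _) (hrowle k₀)
  set nu2 := Real.sqrt (∑ k ∈ I \ J, x k ^ 2) with hnu2
  have hnu20 : 0 ≤ nu2 := Real.sqrt_nonneg _
  set numax := (I \ J).sup' hL fun k => |x k| with hnumax
  have hfac : (0:ℝ) ≤ 2 + 2 * ϑ / (1 - ϑ) := by
    have : 0 ≤ 2 * ϑ / (1 - ϑ) := by positivity
    linarith
  have hnu2pos : 0 < nu2 := by
    rcases eq_or_lt_of_le hnu20 with heq | hpos
    · exfalso
      have hnn := mul_nonneg hhs0 hfac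
      rw [← heq, div_zero] at hmain
      linarith
    · exact hpos
  have hkey : hs * (2 + 2 * ϑ / (1 - ϑ)) * nu2 < numax := (lt_div_iff₀ hnu2pos).mp hmain
  set nc := Real.sqrt (∑ j : ↥J, cv j ^ 2) with hnc'
  have hnc0 : 0 ≤ nc := Real.sqrt_nonneg _
  -- S1 bound
  have hS1 : ∀ m : Fin K, |∑ l ∈ I \ J, H m l * x l| ≤ hs * nu2 := by
    intro m
    calc |∑ l ∈ I \ J, H m l * x l|
        ≤ Real.sqrt (∑ l ∈ I \ J, H m l ^ 2) * nu2 := abs_sum_mul_le _ _ _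
      _ ≤ hs * nu2 := by
          apply mul_le_mul_of_nonneg_right _ hnu20
          refine le_trans (Real.sqrt_le_sqrt ?_) (hrowle m)
          exact Finset.sum_le_sum_of_subset_of_nonneg Finset.sdiff_subset
            (fun _ _ _ => sq_nonneg _)
  -- S2 bound
  have hS2 : ∀ m : Fin K, |∑ j : ↥J, H m j.val * cv j| ≤ hs * nc := by
    intro m
    calc |∑ j : ↥J, H m j.val * cv j|
        ≤ Real.sqrt (∑ j : ↥J, (H m j.val) ^ 2) * nc := abs_sum_mul_le _ _ _
      _ ≤ hs * nc := by
          apply mul_le_mul_of_nonneg_right _ hnc0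
          refine le_trans (Real.sqrt_le_sqrt ?_) (hrowle m)
          have hatt : ∑ j : ↥J, (H m j.val) ^ 2 = ∑ k ∈ J, H m k ^ 2 := by
            rw [Finset.univ_eq_attach]
            exact Finset.sum_attach J (fun k => H m k ^ 2)
          rw [hatt]
          exact Finset.sum_le_sum_of_subset_of_nonneg hJsub (fun _ _ _ => sq_nonneg _)
  -- bound on ‖bv‖
  have hLsub : I \ J ⊆ I := Finset.sdiff_subset
  have hbnorm : Real.sqrt (∑ j : ↥J, bv j ^ 2) ≤ ϑ * nu2 := by
    set MJL : Matrix ↥J ↥(I \ J) ℝ := H.submatrix Subtype.val Subtype.val with hMJL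
    set uL : ↥(I \ J) → ℝ := fun l => x l.val with huL
    have hbv2 : bv = MJL.mulVec uL := by
      funext j
      simp only [hbv, hMJL, huL, Matrix.mulVec, dotProduct, Matrix.submatrix_apply,
        Finset.univ_eq_attach]
      exact (Finset.sum_attach (I \ J) (fun k => H j.val k * x k)).symm
    have hMJLle : opNorm MJL ≤ ϑ := by
      have hrepr : MJL = (H.submatrix (Subtype.val : ↥I → Fin K) Subtype.val).submatrix
          (fun j : ↥J => (⟨j.val, hJsub j.2⟩ : ↥I))
          (fun l : ↥(I \ J) => (⟨l.val, hLsub l.2⟩ : ↥I)) := by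
        ext j l; simp [hMJL]
      rw [hϑdef, hrepr]
      exact opNorm_submatrix_le _ _ _ hinclJ (fun a b hab => by
        have hv := congrArg Subtype.val hab; exact Subtype.ext hv)
    have h2 : Real.sqrt (∑ l : ↥(I \ J), uL l ^ 2) = nu2 := by
      rw [hnu2]
      congr 1
      rw [Finset.univ_eq_attach]
      exact Finset.sum_attach (I \ J) (fun k => x k ^ 2)
    rw [hbv2]
    calc Real.sqrt (∑ j : ↥J, (MJL.mulVec uL j) ^ 2)
        ≤ opNorm MJL * Real.sqrt (∑ l : ↥(I \ J), uL l ^ 2) := sqrt_sum_mulVec_le MJL uL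
      _ = opNorm MJL * nu2 := by rw [h2]
      _ ≤ ϑ * nu2 := mul_le_mul_of_nonneg_right hMJLle hnu20
  -- bound on nc
  have hGc : G.mulVec cv = bv := by
    rw [hcv, Matrix.mulVec_mulVec, hGGi, Matrix.one_mulVec]
  have hbdecomp : ∀ j, cv j = bv j + -(NJ.mulVec cv j) := by
    have hb2 : bv = cv + NJ.mulVec cv := by
      rw [← hGc, hG1, Matrix.add_mulVec, Matrix.one_mulVec]
    intro j
    have := congrFun hb2 j
    simp only [Pi.add_apply] at this
    linarith
  have hNcle : Real.sqrt (∑ j : ↥J, (-(NJ.mulVec cv j)) ^ 2) ≤ ϑ * nc := by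
    simp only [neg_sq]
    calc Real.sqrt (∑ j : ↥J, (NJ.mulVec cv j) ^ 2)
        ≤ opNorm NJ * Real.sqrt (∑ j : ↥J, cv j ^ 2) := sqrt_sum_mulVec_le NJ cv
      _ ≤ ϑ * nc := mul_le_mul_of_nonneg_right hNJle hnc0
  have hncle : nc ≤ ϑ / (1 - ϑ) * nu2 := by
    have tri : nc ≤ Real.sqrt (∑ j : ↥J, bv j ^ 2)
        + Real.sqrt (∑ j : ↥J, (-(NJ.mulVec cv j)) ^ 2) := by
      have hnceq : nc = Real.sqrt (∑ j : ↥J, (bv j + -(NJ.mulVec cv j)) ^ 2) := by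
        rw [hnc']
        congr 1
        exact Finset.sum_congr rfl fun j _ => by rw [← hbdecomp j]
      rw [hnceq]
      exact sqrt_sum_sq_add_le _ _ _
    have h3 : nc ≤ ϑ * nu2 + ϑ * nc := le_trans tri (add_le_add hbnorm hNcle)
    rw [div_mul_eq_mul_div, le_div_iff₀ h1ϑ]
    nlinarith
  -- final assembly
  refine ⟨k₀, hk₀L, ?_⟩
  intro m hm
  have hmI : ∀ l ∈ I \ J, m ≠ l := fun l hl hh => hm (hh ▸ (Finset.mem_sdiff.mp hl).1)
  have hmJ : ∀ j : ↥J, m ≠ j.val := fun j hh => hm (hJsub (hh ▸ j.2))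
  have hdm : (∑ row, Φ row m * rJ row)
      = (∑ l ∈ I \ J, H m l * x l) - ∑ j : ↥J, H m j.val * cv j := by
    rw [hdotr m]
    congr 1
    · exact Finset.sum_congr rfl fun l hl => by rw [if_neg (hmI l hl), add_zero]
    · exact Finset.sum_congr rfl fun j _ => by rw [if_neg (hmJ j), add_zero]
  have hk₀J : k₀ ∉ J := (Finset.mem_sdiff.mp hk₀L).2
  have hdk : (∑ row, Φ row k₀ * rJ row)
      = x k₀ + (∑ l ∈ I \ J, H k₀ l * x l) - ∑ j : ↥J, H k₀ j.val * cv j := by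
    rw [hdotr k₀]
    have e1 : ∑ l ∈ I \ J, (H k₀ l + if k₀ = l then 1 else 0) * x l
        = (∑ l ∈ I \ J, H k₀ l * x l) + x k₀ := by
      have : ∀ l ∈ I \ J, (H k₀ l + if k₀ = l then 1 else 0) * x l
          = H k₀ l * x l + (if k₀ = l then x l else 0) := by
        intro l _; split_ifs <;> ring
      rw [Finset.sum_congr rfl this, Finset.sum_add_distrib, Finset.sum_ite_eq,
        if_pos hk₀L]
    have e2 : ∑ j : ↥J, (H k₀ j.val + if k₀ = j.val then 1 else 0) * cv j
        = ∑ j : ↥J, H k₀ j.val * cv j := by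
      refine Finset.sum_congr rfl fun j _ => ?_
      rw [if_neg (fun hh : k₀ = j.val => hk₀J (hh ▸ j.2)), add_zero]
    rw [e1, e2]; ring
  have hS2' : ∀ m' : Fin K, |∑ j : ↥J, H m' j.val * cv j| ≤ hs * (ϑ / (1 - ϑ) * nu2) :=
    fun m' => le_trans (hS2 m') (mul_le_mul_of_nonneg_left hncle hhs0)
  have hb1 : |∑ row, Φ row m * rJ row| ≤ hs * nu2 + hs * (ϑ / (1 - ϑ) * nu2) := by
    rw [hdm]
    calc |(∑ l ∈ I \ J, H m l * x l) - ∑ j : ↥J, H m j.val * cv j|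
        ≤ |∑ l ∈ I \ J, H m l * x l| + |∑ j : ↥J, H m j.val * cv j| := abs_sub _ _
      _ ≤ hs * nu2 + hs * (ϑ / (1 - ϑ) * nu2) := add_le_add (hS1 m) (hS2' m)
  have hb2 : numax - (hs * nu2 + hs * (ϑ / (1 - ϑ) * nu2))
      ≤ |∑ row, Φ row k₀ * rJ row| := by
    rw [hdk]
    have habs : |x k₀| ≤ |x k₀ + (∑ l ∈ I \ J, H k₀ l * x l) - ∑ j : ↥J, H k₀ j.val * cv j|
        + (|∑ l ∈ I \ J, H k₀ l * x l| + |∑ j : ↥J, H k₀ j.val * cv j|) := by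
      have e3 : x k₀ = (x k₀ + (∑ l ∈ I \ J, H k₀ l * x l) - ∑ j : ↥J, H k₀ j.val * cv j)
          + ((∑ j : ↥J, H k₀ j.val * cv j) - ∑ l ∈ I \ J, H k₀ l * x l) := by ring
      calc |x k₀| = |(x k₀ + (∑ l ∈ I \ J, H k₀ l * x l) - ∑ j : ↥J, H k₀ j.val * cv j)
          + ((∑ j : ↥J, H k₀ j.val * cv j) - ∑ l ∈ I \ J, H k₀ l * x l)| := by rw [← e3]
        _ ≤ |x k₀ + (∑ l ∈ I \ J, H k₀ l * x l) - ∑ j : ↥J, H k₀ j.val * cv j|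
            + |(∑ j : ↥J, H k₀ j.val * cv j) - ∑ l ∈ I \ J, H k₀ l * x l| := abs_add_le _ _
        _ ≤ _ := by
            have := abs_sub (∑ j : ↥J, H k₀ j.val * cv j) (∑ l ∈ I \ J, H k₀ l * x l)
            linarith
    have h4 := hS1 k₀
    have h5 := hS2' k₀
    have h6 : numax = |x k₀| := hk₀
    linarith
  have h2B : 2 * (hs * nu2 + hs * (ϑ / (1 - ϑ) * nu2)) < numax := by
    have heq2 : hs * (2 + 2 * ϑ / (1 - ϑ)) * nu2
        = 2 * (hs * nu2 + hs * (ϑ / (1 - ϑ) * nu2)) := by ring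
    linarith [hkey, heq2 ▸ hkey]
  linarith
end

section
/- Let Φ have unit-norm columns, I a support with Φ_I of full column rank, and set M = Φ_{I^c}*Φ_I(Φ_I*Φ_I)^{-1}. If ϑ := ‖Φ_I*Φ_I − I‖_{2,2} < 1, then the maximal row ℓ₂-norm satisfies ‖M‖_{∞,2} ≤ ‖H_I‖_{∞,2}/(1−ϑ), where H = Φ*Φ − I. -/
open Matrix
open scoped BigOperators

lemma enorm_eq {ι : Type*} [Fintype ι] (w : ι → ℝ) :
    ‖(WithLp.equiv 2 (ι → ℝ)).symm w‖ = Real.sqrt (∑ i, w i ^ 2) := by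
  rw [EuclideanSpace.norm_eq]
  congr 1
  refine Finset.sum_congr rfl fun i _ => ?_
  rw [Real.norm_eq_abs, sq_abs, WithLp.equiv_symm_apply, WithLp.ofLp_toLp]

lemma mulVec_norm_le {ι : Type*} [Fintype ι] [DecidableEq ι] (N : Matrix ι ι ℝ) (w : ι → ℝ) :
    ‖(WithLp.equiv 2 (ι → ℝ)).symm (N *ᵥ w)‖ ≤
      opNorm N * ‖(WithLp.equiv 2 (ι → ℝ)).symm w‖ := by
  rw [WithLp.equiv_symm_apply, ← Matrix.toEuclideanLin_apply_piLp_toLp]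
  exact (LinearMap.toContinuousLinearMap (Matrix.toEuclideanLin N)).le_opNorm _

theorem stmt14 {d K : ℕ} (Φ : Matrix (Fin d) (Fin K) ℝ)
    (hunit : ∀ k, ∑ i, Φ i k ^ 2 = 1)
    (I : Finset (Fin K))
    (hrank : IsUnit (((Φᵀ * Φ).submatrix (Subtype.val : ↥I → Fin K)
      (Subtype.val : ↥I → Fin K)).det))
    (ϑ : ℝ)
    (hϑdef : ϑ = opNorm ((Φᵀ * Φ - 1).submatrix (Subtype.val : ↥I → Fin K)
      (Subtype.val : ↥I → Fin K)))
    (hϑ : ϑ < 1)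
    (M : Matrix {k : Fin K // k ∉ I} ↥I ℝ)
    (hM : M = (Φᵀ * Φ).submatrix (Subtype.val : {k : Fin K // k ∉ I} → Fin K)
        (Subtype.val : ↥I → Fin K) *
      ((Φᵀ * Φ).submatrix (Subtype.val : ↥I → Fin K) (Subtype.val : ↥I → Fin K))⁻¹) :
    (⨆ k : {k : Fin K // k ∉ I}, Real.sqrt (∑ j : ↥I, M k j ^ 2)) ≤
      (⨆ i, Real.sqrt (∑ j ∈ I, ((Φᵀ * Φ - 1 : Matrix (Fin K) (Fin K) ℝ) i j) ^ 2)) /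
        (1 - ϑ) := by
  set A := Φᵀ * Φ with hA
  set G := A.submatrix (Subtype.val : ↥I → Fin K) (Subtype.val : ↥I → Fin K) with hG
  set E := (A - 1).submatrix (Subtype.val : ↥I → Fin K) (Subtype.val : ↥I → Fin K) with hE
  have hAsymm : Aᵀ = A := by rw [hA, transpose_mul, transpose_transpose]
  have hGsymm : Gᵀ = G := by rw [hG, transpose_submatrix, hAsymm]
  have hGG : G * G⁻¹ = 1 := Matrix.mul_nonsing_inv _ hrank
  have hGinvsymm : (G⁻¹)ᵀ = G⁻¹ := by rw [Matrix.transpose_nonsing_inv, hGsymm]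
  have hEG : G = E + 1 := by
    ext i j
    simp only [hG, hE, Matrix.submatrix_apply, Matrix.add_apply, Matrix.sub_apply,
      Matrix.one_apply]
    have : (i.val = j.val) ↔ (i = j) := Subtype.val_inj
    by_cases h : i = j <;> simp [h, this]
  have hden : (0 : ℝ) < 1 - ϑ := by linarith
  set h := ⨆ i, Real.sqrt (∑ j ∈ I, ((A - 1 : Matrix (Fin K) (Fin K) ℝ) i j) ^ 2) with hh
  have hhnn : 0 ≤ h := Real.iSup_nonneg fun i => Real.sqrt_nonneg _
  apply Real.iSup_le _ (div_nonneg hhnn hden.le)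
  intro k
  set b : ↥I → ℝ := fun j => A k.val j.val with hb
  have hMk : (fun j => M k j) = G⁻¹ *ᵥ b := by
    funext j
    rw [hM]
    simp only [Matrix.mul_apply, Matrix.mulVec, dotProduct, Matrix.submatrix_apply]
    refine Finset.sum_congr rfl fun l _ => ?_
    rw [mul_comm]
    congr 1
    exact congrFun (congrFun hGinvsymm j) l
  have hbeq : b = E *ᵥ (fun j => M k j) + (fun j => M k j) := by
    have : G *ᵥ (fun j => M k j) = b := by
      rw [hMk, Matrix.mulVec_mulVec, hGG, Matrix.one_mulVec]
    rw [← this, hEG, Matrix.add_mulVec, Matrix.one_mulVec]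
  set nM := ‖(WithLp.equiv 2 (↥I → ℝ)).symm (fun j => M k j)‖ with hnM
  set nb := ‖(WithLp.equiv 2 (↥I → ℝ)).symm b‖ with hnb
  have hEle : ‖(WithLp.equiv 2 (↥I → ℝ)).symm (E *ᵥ (fun j => M k j))‖ ≤ ϑ * nM := by
    rw [hϑdef]
    exact mulVec_norm_le _ _
  have htri : nM ≤ nb + ϑ * nM := by
    have h1 : (WithLp.equiv 2 (↥I → ℝ)).symm b
        = (WithLp.equiv 2 (↥I → ℝ)).symm (E *ᵥ fun j => M k j)
          + (WithLp.equiv 2 (↥I → ℝ)).symm (fun j => M k j) := by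
      rw [hbeq]; rfl
    have heq : (WithLp.equiv 2 (↥I → ℝ)).symm b
        - (WithLp.equiv 2 (↥I → ℝ)).symm (E *ᵥ fun j => M k j)
        = (WithLp.equiv 2 (↥I → ℝ)).symm (fun j => M k j) := by
      rw [h1]; abel
    have h2 : nM ≤ nb + ‖(WithLp.equiv 2 (↥I → ℝ)).symm (E *ᵥ fun j => M k j)‖ := by
      rw [hnM, ← heq]; exact norm_sub_le _ _
    linarith
  have hnMle : nM ≤ nb / (1 - ϑ) := by
    rw [le_div_iff₀ hden]
    nlinarith [htri]
  have hnbh : nb ≤ h := by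
    have hbval : nb = Real.sqrt (∑ j ∈ I, ((A - 1 : Matrix (Fin K) (Fin K) ℝ) k.val j) ^ 2) := by
      rw [hnb, enorm_eq]
      congr 1
      rw [← Finset.sum_coe_sort I (fun j => ((A - 1 : Matrix (Fin K) (Fin K) ℝ) k.val j) ^ 2)]
      refine Finset.sum_congr rfl fun j _ => ?_
      have hne : k.val ≠ j.val := fun hc => k.prop (hc ▸ j.prop)
      simp [hb, Matrix.sub_apply, Matrix.one_apply, hne]
    rw [hbval, hh]
    exact le_ciSup (f := fun i => Real.sqrt (∑ j ∈ I, ((A - 1 : Matrix (Fin K) (Fin K) ℝ) i j) ^ 2))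
      (Set.Finite.bddAbove (Set.finite_range _)) k.val
  have : Real.sqrt (∑ j : ↥I, M k j ^ 2) = nM := by rw [hnM, enorm_eq]
  rw [this]
  calc nM ≤ nb / (1 - ϑ) := hnMle
    _ ≤ h / (1 - ϑ) := by gcongr
end

section
/- Let Φ ∈ ℝ^{d×K}, I ⊆ {1,...,K} with Φ_I of full column rank, and y = ∑_{i∈I} φ_i x_i with x_i ≠ 0 for i ∈ I. If ‖Φ_{I^c}*Φ_I(Φ_I*Φ_I)^{-1} sign(x_I)‖_∞ < 1, then x (extended by zero off I) is the unique solution of min ‖z‖₁ subject to Φz = y. -/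
/-!
A dual certificate: take `w = Φᵀ Φ_I (Φ_Iᵀ Φ_I)⁻¹ sign(x_I)`, a vector in the row space of `Φ`
that equals `sign x` on `I` and has modulus `< 1` off `I` by hypothesis. For any `z` with
`Φ z = Φ x`, `‖x‖₁ = ⟪x, w⟫ = ⟪z, w⟫ ≤ ‖z‖₁`, and equality forces `z` to vanish off `I`, where
`Φ` is injective because the Gram matrix `Φ_Iᵀ Φ_I` is invertible.
-/

open Matrix

lemma Real.mul_sign_self (a : ℝ) : a * Real.sign a = |a| := by
  rcases lt_trichotomy a 0 with h | rfl | h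
  · rw [Real.sign_of_neg h, abs_of_neg h, mul_neg_one]
  · simp
  · rw [Real.sign_of_pos h, abs_of_pos h, mul_one]

lemma Real.abs_sign_le_one (a : ℝ) : |Real.sign a| ≤ 1 := by
  rcases Real.sign_apply_eq a with h | h | h <;> rw [h] <;> norm_num

lemma mul_le_abs_of_abs_le_one (a b : ℝ) (hb : |b| ≤ 1) : a * b ≤ |a| := calc
  a * b ≤ |a| * |b| := (le_abs_self _).trans (abs_mul _ _).le
  _ ≤ |a| := mul_le_of_le_one_right (abs_nonneg _) hb

lemma mul_lt_abs_of_abs_lt_one {a b : ℝ} (ha : a ≠ 0) (hb : |b| < 1) : a * b < |a| := calc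
  a * b ≤ |a| * |b| := (le_abs_self _).trans (abs_mul _ _).le
  _ < |a| := mul_lt_of_lt_one_right (abs_pos.mpr ha) hb

lemma dotProduct_lt_sum_abs {n : Type*} [Fintype n] (z w : n → ℝ) (hw : ∀ i, |w i| ≤ 1)
    {k : n} (hzk : z k ≠ 0) (hwk : |w k| < 1) : z ⬝ᵥ w < ∑ i, |z i| :=
  Finset.sum_lt_sum (fun i _ => mul_le_abs_of_abs_le_one _ _ (hw i))
    ⟨k, Finset.mem_univ k, mul_lt_abs_of_abs_lt_one hzk hwk⟩

theorem sum_abs_lt_of_dualCertificate {m n : Type*} [Fintype m] [Fintype n]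
    (Φ : Matrix m n ℝ) (I : Set n) (hinj : ∀ v : n → ℝ, (∀ k ∉ I, v k = 0) → Φ *ᵥ v = 0 → v = 0)
    (x : n → ℝ) (c : m → ℝ) (hx : ∀ k ∉ I, x k = 0) (hxw : ∀ i, x i * (Φᵀ *ᵥ c) i = |x i|)
    (hw : ∀ i, |(Φᵀ *ᵥ c) i| ≤ 1) (hwOff : ∀ k ∉ I, |(Φᵀ *ᵥ c) k| < 1)
    {z : n → ℝ} (hz : Φ *ᵥ z = Φ *ᵥ x) (hzx : z ≠ x) : ∑ i, |x i| < ∑ i, |z i| := by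
  obtain ⟨k, hk, hzk⟩ : ∃ k ∉ I, z k ≠ 0 := by
    by_contra! hzI
    refine hzx (sub_eq_zero.mp (hinj _ (fun k hk => ?_) ?_))
    · simp [hzI k hk, hx k hk]
    · rw [mulVec_sub, hz, sub_self]
  have hpair : ∀ y, y ⬝ᵥ (Φᵀ *ᵥ c) = (Φ *ᵥ y) ⬝ᵥ c := fun y => by
    rw [dotProduct_mulVec, vecMul_transpose]
  calc ∑ i, |x i| = x ⬝ᵥ (Φᵀ *ᵥ c) := Finset.sum_congr rfl fun i _ => (hxw i).symm
    _ = z ⬝ᵥ (Φᵀ *ᵥ c) := by rw [hpair, hpair, hz]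
    _ < ∑ i, |z i| := dotProduct_lt_sum_abs z _ hw hzk (hwOff k hk)

lemma submatrix_mulVec_comp_val {l k n R : Type*} [Fintype n] [NonUnitalNonAssocSemiring R]
    (G : Matrix l n R) (f : k → l) (I : Finset n) {v : n → R} (hv : ∀ j ∉ I, v j = 0) :
    G.submatrix f (Subtype.val : ↥I → n) *ᵥ (v ∘ Subtype.val) = (G *ᵥ v) ∘ f := by
  funext i
  simp only [mulVec, dotProduct, submatrix_apply, Function.comp_apply]
  rw [Finset.sum_coe_sort I (fun j => G (f i) j * v j)]
  exact Finset.sum_subset I.subset_univ fun j _ hj => by rw [hv j hj, mul_zero]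

section Gram

variable {m n : Type*} [Fintype m] [Fintype n] [DecidableEq n]
  (Φ : Matrix m n ℝ) (I : Finset n)
  (hrank : IsUnit (((Φᵀ * Φ).submatrix (Subtype.val : ↥I → n) (Subtype.val : ↥I → n)).det))
include hrank

lemma eq_zero_of_mulVec_eq_zero_of_isUnit_det_gram (v : n → ℝ) (hv : ∀ k ∉ I, v k = 0)
    (hΦv : Φ *ᵥ v = 0) : v = 0 := by
  have hgram : (Φᵀ * Φ).submatrix (Subtype.val : ↥I → n) Subtype.val *ᵥ
      (v ∘ (Subtype.val : ↥I → n)) = 0 := by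
    rw [submatrix_mulVec_comp_val _ _ I hv, ← mulVec_mulVec, hΦv, mulVec_zero]
    rfl
  have hvI : v ∘ Subtype.val = 0 :=
    (mulVec_injective_iff_isUnit.mpr ((isUnit_iff_isUnit_det _).mpr hrank))
      (hgram.trans (mulVec_zero _).symm)
  funext k
  by_cases hk : k ∈ I
  · exact congrFun hvI ⟨k, hk⟩
  · exact hv k hk

lemma exists_transpose_mulVec_eq (s : ↥I → ℝ) :
    ∃ c : m → ℝ, (∀ i : ↥I, (Φᵀ *ᵥ c) i = s i) ∧ ∀ k, (Φᵀ *ᵥ c) k =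
      (((Φᵀ * Φ).submatrix id (Subtype.val : ↥I → n) *
        ((Φᵀ * Φ).submatrix (Subtype.val : ↥I → n) Subtype.val)⁻¹) *ᵥ s) k := by
  set A := (Φᵀ * Φ).submatrix (Subtype.val : ↥I → n) Subtype.val
  set v : n → ℝ := Function.extend Subtype.val (A⁻¹ *ᵥ s) 0
  have hv : ∀ k ∉ I, v k = 0 := fun k hk =>
    Function.extend_apply' _ _ _ fun ⟨j, hj⟩ => hk (hj ▸ j.2)
  have hvI : v ∘ Subtype.val = A⁻¹ *ᵥ s :=
    funext (Subtype.val_injective.extend_apply _ _)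
  have hw : Φᵀ *ᵥ (Φ *ᵥ v) = (Φᵀ * Φ).submatrix id (Subtype.val : ↥I → n) *ᵥ (A⁻¹ *ᵥ s) := by
    rw [mulVec_mulVec, ← hvI, submatrix_mulVec_comp_val _ _ I hv]; rfl
  refine ⟨Φ *ᵥ v, fun i => ?_, fun k => by rw [hw, mulVec_mulVec]⟩
  rw [hw]
  change (A *ᵥ (A⁻¹ *ᵥ s)) i = s i
  rw [mulVec_mulVec, mul_nonsing_inv _ hrank, one_mulVec]

end Gram

theorem stmt19_general {d K : ℕ} (Φ : Matrix (Fin d) (Fin K) ℝ) (I : Finset (Fin K))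
    (x : Fin K → ℝ) (hsupp : ∀ i, i ∉ I → x i = 0)
    (hrank : IsUnit (((Φᵀ * Φ).submatrix (Subtype.val : ↥I → Fin K)
      (Subtype.val : ↥I → Fin K)).det))
    (herc : ∀ k, k ∉ I →
      |∑ j : ↥I,
          (∑ i : ↥I, (Φᵀ * Φ : Matrix (Fin K) (Fin K) ℝ) k i.val *
            (((Φᵀ * Φ).submatrix (Subtype.val : ↥I → Fin K)
              (Subtype.val : ↥I → Fin K))⁻¹) i j) *
          Real.sign (x j.val)| < 1) :
    ∀ z : Fin K → ℝ, Φ.mulVec z = Φ.mulVec x → z ≠ x → ∑ i, |x i| < ∑ i, |z i| := by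
  intro z hz hzx
  obtain ⟨c, hcI, hc⟩ := exists_transpose_mulVec_eq Φ I hrank fun j => Real.sign (x j)
  have hwI : ∀ i ∈ I, (Φᵀ *ᵥ c) i = Real.sign (x i) := fun i hi => hcI ⟨i, hi⟩
  have hwOff : ∀ k ∉ I, |(Φᵀ *ᵥ c) k| < 1 := fun k hk => by rw [hc]; exact herc k hk
  refine sum_abs_lt_of_dualCertificate Φ I
    (eq_zero_of_mulVec_eq_zero_of_isUnit_det_gram Φ I hrank) x c hsupp
    (fun i => ?_) (fun i => ?_) hwOff hz hzx
  · by_cases hi : i ∈ I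
    · rw [hwI i hi, Real.mul_sign_self]
    · simp [hsupp i hi]
  · by_cases hi : i ∈ I
    · exact (hwI i hi).symm ▸ Real.abs_sign_le_one _
    · exact (hwOff i hi).le

theorem stmt19 {d K : ℕ} (Φ : Matrix (Fin d) (Fin K) ℝ) (I : Finset (Fin K))
    (x : Fin K → ℝ) (hsupp : ∀ i, i ∉ I → x i = 0) (hnz : ∀ i ∈ I, x i ≠ 0)
    (hrank : IsUnit (((Φᵀ * Φ).submatrix (Subtype.val : ↥I → Fin K)
      (Subtype.val : ↥I → Fin K)).det))
    (herc : ∀ k, k ∉ I →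
      |∑ j : ↥I,
          (∑ i : ↥I, (Φᵀ * Φ : Matrix (Fin K) (Fin K) ℝ) k i.val *
            (((Φᵀ * Φ).submatrix (Subtype.val : ↥I → Fin K)
              (Subtype.val : ↥I → Fin K))⁻¹) i j) *
          Real.sign (x j.val)| < 1) :
    ∀ z : Fin K → ℝ, Φ.mulVec z = Φ.mulVec x → z ≠ x → ∑ i, |x i| < ∑ i, |z i| :=
  stmt19_general Φ I x hsupp hrank herc
end
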